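/- arXiv:1905.07615 — 4 statements merged into one kernel-verified Lean document; each statement's English description precedes it below -/
import Mathlib

section
/- For all integers k and t with k ≥ 2 and 0 ≤ t ≤ k, gr_k(K_3 : t·P_5, (k−t)·P_3) ≤ t + 4. Equivalently, for every n ≥ t + 4, every edge-coloring of K_n with colors 1, ..., k contains either a rainbow triangle, or a monochromatic path on 5 vertices in some color j with 1 ≤ j ≤ t, or a monochromatic path on 3 vertices in some color j with t + 1 ≤ j ≤ k. -/
/-- The coloring `c` of the edges of the complete graph on `Fin n` contains a rainbow
triangle: three vertices whose three connecting edges receive three distinct colors. -/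
def hasRainbowTriangle {n k : ℕ} (c : Sym2 (Fin n) → Fin k) : Prop :=
  ∃ a b d : Fin n, a ≠ b ∧ a ≠ d ∧ b ≠ d ∧
    c s(a, b) ≠ c s(a, d) ∧ c s(a, b) ≠ c s(b, d) ∧ c s(a, d) ≠ c s(b, d)

/-- The coloring `c` contains a path on `m` vertices all of whose edges receive color `j`. -/
def hasMonoPath {n k : ℕ} (c : Sym2 (Fin n) → Fin k) (m : ℕ) (j : Fin k) : Prop :=
  ∃ v : Fin m → Fin n, Function.Injective v ∧
    ∀ (i : ℕ) (h : i + 1 < m),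
      c s(v ⟨i, Nat.lt_of_succ_lt h⟩, v ⟨i + 1, h⟩) = j

/-- The coloring `c` contains a cycle on `m` vertices all of whose edges receive color `j`. -/
def hasMonoCycle {n k : ℕ} (c : Sym2 (Fin n) → Fin k) (m : ℕ) (j : Fin k) : Prop :=
  ∃ v : Fin m → Fin n, Function.Injective v ∧
    ∀ i : Fin m, c s(v i, v ⟨(i.val + 1) % m, Nat.mod_lt _ i.pos⟩) = j

def P3In {n k : ℕ} (c : Sym2 (Fin n) → Fin k) (S : Finset (Fin n)) (j : Fin k) : Prop :=
  ∃ x y z : Fin n, x ∈ S ∧ y ∈ S ∧ z ∈ S ∧ x ≠ y ∧ x ≠ z ∧ y ≠ z ∧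
    c s(x, y) = j ∧ c s(y, z) = j

def P5In {n k : ℕ} (c : Sym2 (Fin n) → Fin k) (S : Finset (Fin n)) (j : Fin k) : Prop :=
  ∃ x y z u v : Fin n, x ∈ S ∧ y ∈ S ∧ z ∈ S ∧ u ∈ S ∧ v ∈ S ∧
    x ≠ y ∧ x ≠ z ∧ x ≠ u ∧ x ≠ v ∧ y ≠ z ∧ y ≠ u ∧ y ≠ v ∧ z ≠ u ∧ z ≠ v ∧ u ≠ v ∧
    c s(x, y) = j ∧ c s(y, z) = j ∧ c s(z, u) = j ∧ c s(u, v) = j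

variable {n k : ℕ} {c : Sym2 (Fin n) → Fin k} {S : Finset (Fin n)} {T : Finset (Fin k)}

lemma csw (c : Sym2 (Fin n) → Fin k) (x y : Fin n) : c s(x, y) = c s(y, x) := by
  rw [Sym2.eq_swap]

lemma nr (hNR : ¬hasRainbowTriangle c) {a b d : Fin n} (hab : a ≠ b) (had : a ≠ d)
    (hbd : b ≠ d) :
    c s(a, b) = c s(a, d) ∨ c s(a, b) = c s(b, d) ∨ c s(a, d) = c s(b, d) := by
  by_contra h
  push_neg at h
  exact hNR ⟨a, b, d, hab, had, hbd, h.1, h.2.1, h.2.2⟩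

lemma p5F (h1 : ∀ j ∈ T, ¬P5In c S j) (h2 : ∀ j, j ∉ T → ¬P3In c S j)
    {v1 v2 v3 v4 v5 : Fin n} {g : Fin k}
    (m1 : v1 ∈ S) (m2 : v2 ∈ S) (m3 : v3 ∈ S) (m4 : v4 ∈ S) (m5 : v5 ∈ S)
    (d12 : v1 ≠ v2) (d13 : v1 ≠ v3) (d14 : v1 ≠ v4) (d15 : v1 ≠ v5)
    (d23 : v2 ≠ v3) (d24 : v2 ≠ v4) (d25 : v2 ≠ v5)
    (d34 : v3 ≠ v4) (d35 : v3 ≠ v5) (d45 : v4 ≠ v5)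
    (e1 : c s(v1, v2) = g) (e2 : c s(v2, v3) = g) (e3 : c s(v3, v4) = g)
    (e4 : c s(v4, v5) = g) : False := by
  by_cases hg : g ∈ T
  · exact h1 g hg ⟨v1, v2, v3, v4, v5, m1, m2, m3, m4, m5, d12, d13, d14, d15, d23, d24,
      d25, d34, d35, d45, e1, e2, e3, e4⟩
  · exact h2 g hg ⟨v1, v2, v3, m1, m2, m3, d12, d13, d23, e1, e2⟩

lemma adjT (h2 : ∀ j, j ∉ T → ¬P3In c S j) {u v w : Fin n}
    (mu : u ∈ S) (mv : v ∈ S) (mw : w ∈ S)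
    (duv : u ≠ v) (duw : u ≠ w) (dvw : v ≠ w)
    (e : c s(u, v) = c s(u, w)) : c s(u, v) ∈ T := by
  by_contra hg
  exact h2 _ hg ⟨v, u, w, mv, mu, mw, duv.symm, dvw, duw,
    (csw c v u), e.symm⟩

lemma quadSub {a b d e : Fin n} (ma : a ∈ S) (mb : b ∈ S) (md : d ∈ S) (me : e ∈ S)
    (dab : a ≠ b) (dad : a ≠ d) (dae : a ≠ e) (dbd : b ≠ d) (dbe : b ≠ e) (dde : d ≠ e) :
    ({a, b, d, e} : Finset (Fin n)) ⊆ S ∧ ({a, b, d, e} : Finset (Fin n)).card = 4 := by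
  constructor
  · intro x hx
    simp only [Finset.mem_insert, Finset.mem_singleton] at hx
    rcases hx with h | h | h | h <;> subst h <;> assumption
  · rw [Finset.card_insert_of_notMem (by simp [dab, dad, dae]),
      Finset.card_insert_of_notMem (by simp [dbd, dbe]),
      Finset.card_insert_of_notMem (by simp [dde]), Finset.card_singleton]

lemma memW {a b d e w : Fin n} (hw : w ∈ S \ ({a, b, d, e} : Finset (Fin n))) :
    w ∈ S ∧ w ≠ a ∧ w ≠ b ∧ w ≠ d ∧ w ≠ e := by
  simp only [Finset.mem_sdiff, Finset.mem_insert, Finset.mem_singleton] at hw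
  push_neg at hw
  exact ⟨hw.1, hw.2.1, hw.2.2.1, hw.2.2.2.1, hw.2.2.2.2⟩

/-- No color contains a 4-cycle. -/
lemma c4F (hNR : ¬hasRainbowTriangle c)
    (h1 : ∀ j ∈ T, ¬P5In c S j) (h2 : ∀ j, j ∉ T → ¬P3In c S j)
    (hcard : T.card + 4 ≤ S.card)
    {a b d e : Fin n} {g : Fin k}
    (ma : a ∈ S) (mb : b ∈ S) (md : d ∈ S) (me : e ∈ S)
    (dab : a ≠ b) (dad : a ≠ d) (dae : a ≠ e) (dbd : b ≠ d) (dbe : b ≠ e) (dde : d ≠ e)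
    (e1 : c s(a, b) = g) (e2 : c s(b, d) = g) (e3 : c s(d, e) = g) (e4 : c s(e, a) = g) :
    False := by
  have hgT : g ∈ T := by
    have h := adjT h2 mb ma md dab.symm dbd dad (by rw [csw c b a, e1, e2])
    rwa [csw c b a, e1] at h
  set W : Finset (Fin n) := S \ ({a, b, d, e} : Finset (Fin n)) with hW
  have hsub := quadSub ma mb md me dab dad dae dbd dbe dde
  have hWcard : W.card = S.card - 4 := by rw [hW, Finset.card_sdiff_of_subset hsub.1, hsub.2]
  -- every vertex outside has no g-edge to the cycle
  have key : ∀ w ∈ W, c s(w, a) = c s(w, b) ∧ c s(w, b) = c s(w, d) ∧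
      c s(w, d) = c s(w, e) := by
    intro w hw
    obtain ⟨mw, dwa, dwb, dwd, dwe⟩ := memW hw
    have nwa : c s(w, a) ≠ g := fun h =>
      p5F h1 h2 mw ma mb md me dwa dwb dwd dwe dab dad dae dbd dbe dde h e1 e2 e3
    have nwb : c s(w, b) ≠ g := fun h =>
      p5F h1 h2 mw mb md me ma dwb dwd dwe dwa dbd dbe dab.symm dde dad.symm dae.symm
        h e2 e3 e4
    have nwd : c s(w, d) ≠ g := fun h =>
      p5F h1 h2 mw md me ma mb dwd dwe dwa dwb dde dad.symm dbd.symm dae.symm dbe.symm dab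
        h e3 e4 e1
    have nwe : c s(w, e) ≠ g := fun h =>
      p5F h1 h2 mw me ma mb md dwe dwa dwb dwd dae.symm dbe.symm dde.symm dab dad dbd
        h e4 e1 e2
    refine ⟨?_, ?_, ?_⟩
    · rcases nr hNR dwa dwb dab with h | h | h
      · exact h
      · exact absurd (h.trans e1) nwa
      · exact absurd (h.trans e1) nwb
    · rcases nr hNR dwb dwd dbd with h | h | h
      · exact h
      · exact absurd (h.trans e2) nwb
      · exact absurd (h.trans e2) nwd
    · rcases nr hNR dwd dwe dde with h | h | h
      · exact h
      · exact absurd (h.trans e3) nwd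
      · exact absurd (h.trans e3) nwe
  have hmap : ∀ w ∈ W, c s(w, a) ∈ T.erase g := by
    intro w hw
    obtain ⟨mw, dwa, dwb, dwd, dwe⟩ := memW hw
    obtain ⟨k1, k2, k3⟩ := key w hw
    refine Finset.mem_erase.2 ⟨?_, adjT h2 mw ma mb dwa dwb dab k1⟩
    intro h
    exact p5F h1 h2 mw ma mb md me dwa dwb dwd dwe dab dad dae dbd dbe dde h e1 e2 e3
  have hinj : Set.InjOn (fun w => c s(w, a)) W := by
    intro w hw w' hw' heq
    by_contra hne
    obtain ⟨mw, dwa, dwb, dwd, dwe⟩ := memW hw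
    obtain ⟨mw', dwa', dwb', dwd', dwe'⟩ := memW hw'
    obtain ⟨k1, k2, k3⟩ := key w hw
    obtain ⟨k1', k2', k3'⟩ := key w' hw'
    simp only at heq
    -- P5 : a - w - b - w' - d in color p = c s(w,a)
    refine p5F h1 h2 ma mw mb mw' md dwa.symm dab dwa'.symm dad dwb hne dwd dwb'.symm dbd
      dwd' (csw c a w) k1.symm ?_ ?_
    · rw [csw c b w', ← k1', ← heq]
    · exact (k1'.trans k2').symm.trans heq.symm
  have hle := Finset.card_le_card_of_injOn _ hmap hinj
  rw [hWcard, Finset.card_erase_of_mem hgT] at hle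
  have hT1 : 1 ≤ T.card := Finset.card_pos.2 ⟨g, hgT⟩
  omega

lemma tripSub {x y z : Fin n} (mx : x ∈ S) (my : y ∈ S) (mz : z ∈ S)
    (dxy : x ≠ y) (dxz : x ≠ z) (dyz : y ≠ z) :
    ({x, y, z} : Finset (Fin n)) ⊆ S ∧ ({x, y, z} : Finset (Fin n)).card = 3 := by
  constructor
  · intro w hw
    simp only [Finset.mem_insert, Finset.mem_singleton] at hw
    rcases hw with h | h | h <;> subst h <;> assumption
  · rw [Finset.card_insert_of_notMem (by simp [dxy, dxz]),
      Finset.card_insert_of_notMem (by simp [dyz]), Finset.card_singleton]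

lemma memW3 {x y z w : Fin n} (hw : w ∈ S \ ({x, y, z} : Finset (Fin n))) :
    w ∈ S ∧ w ≠ x ∧ w ≠ y ∧ w ≠ z := by
  simp only [Finset.mem_sdiff, Finset.mem_insert, Finset.mem_singleton] at hw
  push_neg at hw
  exact ⟨hw.1, hw.2.1, hw.2.2.1, hw.2.2.2⟩

lemma triInner (hNR : ¬hasRainbowTriangle c)
    (h1 : ∀ j ∈ T, ¬P5In c S j) (h2 : ∀ j, j ∉ T → ¬P3In c S j)
    (hcard : T.card + 4 ≤ S.card)
    {g : Fin k} {x y z w0 w1 : Fin n}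
    (mx : x ∈ S) (my : y ∈ S) (mz : z ∈ S)
    (dxy : x ≠ y) (dxz : x ≠ z) (dyz : y ≠ z)
    (exy : c s(x, y) = g) (eyz : c s(y, z) = g) (exz : c s(x, z) = g)
    (mw0 : w0 ∈ S) (d0x : w0 ≠ x) (d0y : w0 ≠ y) (d0z : w0 ≠ z)
    (mw1 : w1 ∈ S) (d1x : w1 ≠ x) (d1y : w1 ≠ y) (d1z : w1 ≠ z) (d01 : w0 ≠ w1)
    (ew0 : c s(w0, x) = g)
    (hw1 : c s(w1, x) = g ∨ c s(w1, y) = g ∨ c s(w1, z) = g) : False := by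
  have hgT : g ∈ T := by
    have h := adjT h2 mx my mz dxy dxz dyz (exy.trans exz.symm)
    rwa [exy] at h
  set W : Finset (Fin n) := S \ ({x, y, z} : Finset (Fin n)) with hWdef
  have hsub := tripSub mx my mz dxy dxz dyz
  have hWcard : W.card = S.card - 3 := by rw [hWdef, Finset.card_sdiff_of_subset hsub.1, hsub.2]
  have claim1 : ∀ w, w ∈ S → w ≠ x → w ≠ y → w ≠ z → w ≠ w0 →
      c s(w, y) ≠ g ∧ c s(w, z) ≠ g := by
    intro w mw dwx dwy dwz dw0
    constructor
    · intro h
      exact p5F h1 h2 mw0 mx mz my mw d0x d0z d0y (dw0.symm) dxz dxy dwx.symm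
        dyz.symm dwz.symm dwy.symm ew0 exz (by rw [csw c z y]; exact eyz)
        (by rw [csw c y w]; exact h)
    · intro h
      exact p5F h1 h2 mw0 mx my mz mw d0x d0y d0z dw0.symm dxy dxz dwx.symm dyz
        dwy.symm dwz.symm ew0 exy eyz (by rw [csw c z w]; exact h)
  have hw1x : c s(w1, x) = g := by
    rcases hw1 with h | h | h
    · exact h
    · exact absurd h (claim1 w1 mw1 d1x d1y d1z d01.symm).1
    · exact absurd h (claim1 w1 mw1 d1x d1y d1z d01.symm).2
  have claim0 : c s(w0, y) ≠ g ∧ c s(w0, z) ≠ g := by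
    constructor
    · intro h
      exact p5F h1 h2 mw1 mx mz my mw0 d1x d1z d1y d01.symm dxz dxy d0x.symm dyz.symm
        d0z.symm d0y.symm hw1x exz (by rw [csw c z y]; exact eyz)
        (by rw [csw c y w0]; exact h)
    · intro h
      exact p5F h1 h2 mw1 mx my mz mw0 d1x d1y d1z d01.symm dxy dxz d0x.symm dyz
        d0y.symm d0z.symm hw1x exy eyz (by rw [csw c z w0]; exact h)
  have hA : ∀ w ∈ W, (c s(w, x) = g ∨ c s(w, y) = g ∨ c s(w, z) = g) →
      c s(w, x) = g ∧ c s(w, y) ≠ g ∧ c s(w, z) ≠ g := by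
    intro w hw hPA
    obtain ⟨mw, dwx, dwy, dwz⟩ := memW3 hw
    by_cases hw0 : w = w0
    · subst hw0; exact ⟨ew0, claim0⟩
    · have cl := claim1 w mw dwx dwy dwz hw0
      rcases hPA with h | h | h
      · exact ⟨h, cl⟩
      · exact absurd h cl.1
      · exact absurd h cl.2
  have hAval : ∀ w ∈ W, (c s(w, x) = g ∨ c s(w, y) = g ∨ c s(w, z) = g) →
      c s(w, y) = c s(w, z) ∧ c s(w, y) ∈ T.erase g := by
    intro w hw hPA
    obtain ⟨mw, dwx, dwy, dwz⟩ := memW3 hw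
    obtain ⟨_, nwy, nwz⟩ := hA w hw hPA
    have heq : c s(w, y) = c s(w, z) := by
      rcases nr hNR dwy dwz dyz with h | h | h
      · exact h
      · exact absurd (h.trans eyz) nwy
      · exact absurd (h.trans eyz) nwz
    exact ⟨heq, Finset.mem_erase.2 ⟨nwy, adjT h2 mw my mz dwy dwz dyz heq⟩⟩
  have hBval : ∀ w ∈ W, ¬(c s(w, x) = g ∨ c s(w, y) = g ∨ c s(w, z) = g) →
      (c s(w, x) = c s(w, y) ∧ c s(w, y) = c s(w, z)) ∧ c s(w, x) ∈ T.erase g := by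
    intro w hw hPA
    push_neg at hPA
    obtain ⟨nwx, nwy, nwz⟩ := hPA
    obtain ⟨mw, dwx, dwy, dwz⟩ := memW3 hw
    have heq1 : c s(w, x) = c s(w, y) := by
      rcases nr hNR dwx dwy dxy with h | h | h
      · exact h
      · exact absurd (h.trans exy) nwx
      · exact absurd (h.trans exy) nwy
    have heq2 : c s(w, y) = c s(w, z) := by
      rcases nr hNR dwy dwz dyz with h | h | h
      · exact h
      · exact absurd (h.trans eyz) nwy
      · exact absurd (h.trans eyz) nwz
    exact ⟨⟨heq1, heq2⟩, Finset.mem_erase.2 ⟨nwx, adjT h2 mw mx my dwx dwy dxy heq1⟩⟩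
  set ψ : Fin n → Fin k := fun w =>
    if c s(w, x) = g ∨ c s(w, y) = g ∨ c s(w, z) = g then c s(w, y) else c s(w, x)
    with hψdef
  have hmap : ∀ w ∈ W, ψ w ∈ T.erase g := by
    intro w hw
    simp only [hψdef]
    by_cases hPA : c s(w, x) = g ∨ c s(w, y) = g ∨ c s(w, z) = g
    · rw [if_pos hPA]; exact (hAval w hw hPA).2
    · rw [if_neg hPA]; exact (hBval w hw hPA).2
  have hinj : Set.InjOn ψ W := by
    intro w hw w' hw' heq
    by_contra hne
    obtain ⟨mw, dwx, dwy, dwz⟩ := memW3 hw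
    obtain ⟨mw', dwx', dwy', dwz'⟩ := memW3 hw'
    rw [hψdef] at heq
    simp only at heq
    by_cases hP : c s(w, x) = g ∨ c s(w, y) = g ∨ c s(w, z) = g <;>
      by_cases hP' : c s(w', x) = g ∨ c s(w', y) = g ∨ c s(w', z) = g
    · rw [if_pos hP, if_pos hP'] at heq
      -- C4 : w - y - w' - z in color c s(w,y)
      exact c4F hNR h1 h2 hcard mw my mw' mz dwy hne dwz dwy'.symm dyz dwz'
        rfl (by rw [csw c y w']; exact heq.symm)
        ((hAval w' hw' hP').1.symm.trans heq.symm)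
        (by rw [csw c z w]; exact (hAval w hw hP).1.symm)
    · rw [if_pos hP, if_neg hP'] at heq
      -- P5 : x - w' - y - w - z in color p = c s(w,y)
      exact p5F h1 h2 mx mw' my mw mz dwx'.symm dxy dwx.symm dxz dwy' (Ne.symm hne)
        dwz' dwy.symm dyz dwz
        (by rw [csw c x w']; exact heq.symm)
        ((hBval w' hw' hP').1.1.symm.trans heq.symm)
        (csw c y w)
        ((hAval w hw hP).1.symm)
    · rw [if_neg hP, if_pos hP'] at heq
      -- P5 : x - w - y - w' - z in color p = c s(w,x)
      exact p5F h1 h2 mx mw my mw' mz dwx.symm dxy dwx'.symm dxz dwy hne dwz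
        dwy'.symm dyz dwz'
        (by rw [csw c x w])
        ((hBval w hw hP).1.1.symm)
        (by rw [csw c y w']; exact heq.symm)
        ((hAval w' hw' hP').1.symm.trans heq.symm)
    · rw [if_neg hP, if_neg hP'] at heq
      -- P5 : x - w - y - w' - z in color p = c s(w,x)
      exact p5F h1 h2 mx mw my mw' mz dwx.symm dxy dwx'.symm dxz dwy hne dwz
        dwy'.symm dyz dwz'
        (by rw [csw c x w])
        ((hBval w hw hP).1.1.symm)
        (by rw [csw c y w']; exact (hBval w' hw' hP').1.1.symm.trans heq.symm)
        ((hBval w' hw' hP').1.2.symm.trans ((hBval w' hw' hP').1.1.symm.trans heq.symm))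
  have hle := Finset.card_le_card_of_injOn _ hmap hinj
  rw [hWcard, Finset.card_erase_of_mem hgT] at hle
  have hT1 : 1 ≤ T.card := Finset.card_pos.2 ⟨g, hgT⟩
  omega

/-- No color contains a triangle. -/
lemma triF (hNR : ¬hasRainbowTriangle c)
    (h1 : ∀ j ∈ T, ¬P5In c S j) (h2 : ∀ j, j ∉ T → ¬P3In c S j)
    (hcard : T.card + 4 ≤ S.card)
    {g : Fin k} {x y z : Fin n}
    (mx : x ∈ S) (my : y ∈ S) (mz : z ∈ S)
    (dxy : x ≠ y) (dxz : x ≠ z) (dyz : y ≠ z)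
    (exy : c s(x, y) = g) (eyz : c s(y, z) = g) (exz : c s(x, z) = g) : False := by
  have hgT : g ∈ T := by
    have h := adjT h2 mx my mz dxy dxz dyz (exy.trans exz.symm)
    rwa [exy] at h
  set W : Finset (Fin n) := S \ ({x, y, z} : Finset (Fin n)) with hWdef
  have hsub := tripSub mx my mz dxy dxz dyz
  have hWcard : W.card = S.card - 3 := by rw [hWdef, Finset.card_sdiff_of_subset hsub.1, hsub.2]
  set A : Finset (Fin n) :=
    W.filter (fun w => c s(w, x) = g ∨ c s(w, y) = g ∨ c s(w, z) = g) with hAdef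
  by_cases hA2 : 1 < A.card
  · obtain ⟨w0, hw0, w1, hw1, hne⟩ := Finset.one_lt_card.1 hA2
    rw [hAdef, Finset.mem_filter] at hw0 hw1
    obtain ⟨mw0, d0x, d0y, d0z⟩ := memW3 hw0.1
    obtain ⟨mw1, d1x, d1y, d1z⟩ := memW3 hw1.1
    rcases hw0.2 with h | h | h
    · exact triInner hNR h1 h2 hcard mx my mz dxy dxz dyz exy eyz exz
        mw0 d0x d0y d0z mw1 d1x d1y d1z hne h hw1.2
    · exact triInner hNR h1 h2 hcard my mx mz dxy.symm dyz dxz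
        (by rw [csw c y x]; exact exy) exz eyz
        mw0 d0y d0x d0z mw1 d1y d1x d1z hne h (by tauto)
    · exact triInner hNR h1 h2 hcard mz my mx dyz.symm dxz.symm dxy.symm
        (by rw [csw c z y]; exact eyz) (by rw [csw c y x]; exact exy)
        (by rw [csw c z x]; exact exz)
        mw0 d0z d0y d0x mw1 d1z d1y d1x hne h (by tauto)
  · -- at most one vertex has a g-edge to the triangle
    push_neg at hA2
    set B : Finset (Fin n) := W \ A with hBdef
    have hBmem : ∀ w ∈ B, w ∈ W ∧
        c s(w, x) ≠ g ∧ c s(w, y) ≠ g ∧ c s(w, z) ≠ g := by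
      intro w hw
      rw [hBdef, Finset.mem_sdiff] at hw
      refine ⟨hw.1, ?_⟩
      have := hw.2
      rw [hAdef, Finset.mem_filter] at this
      push_neg at this
      exact this hw.1
    have hBval : ∀ w ∈ B, (c s(w, x) = c s(w, y) ∧ c s(w, y) = c s(w, z)) ∧
        c s(w, x) ∈ T.erase g := by
      intro w hw
      obtain ⟨hwW, nwx, nwy, nwz⟩ := hBmem w hw
      obtain ⟨mw, dwx, dwy, dwz⟩ := memW3 hwW
      have heq1 : c s(w, x) = c s(w, y) := by
        rcases nr hNR dwx dwy dxy with h | h | h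
        · exact h
        · exact absurd (h.trans exy) nwx
        · exact absurd (h.trans exy) nwy
      have heq2 : c s(w, y) = c s(w, z) := by
        rcases nr hNR dwy dwz dyz with h | h | h
        · exact h
        · exact absurd (h.trans eyz) nwy
        · exact absurd (h.trans eyz) nwz
      exact ⟨⟨heq1, heq2⟩, Finset.mem_erase.2 ⟨nwx, adjT h2 mw mx my dwx dwy dxy heq1⟩⟩
    have hmap : ∀ w ∈ B, c s(w, x) ∈ T.erase g := fun w hw => (hBval w hw).2
    have hinj : Set.InjOn (fun w => c s(w, x)) B := by
      intro w hw w' hw' heq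
      by_contra hne
      obtain ⟨hwW, nwx, nwy, nwz⟩ := hBmem w hw
      obtain ⟨hwW', nwx', nwy', nwz'⟩ := hBmem w' hw'
      obtain ⟨mw, dwx, dwy, dwz⟩ := memW3 hwW
      obtain ⟨mw', dwx', dwy', dwz'⟩ := memW3 hwW'
      simp only at heq
      -- P5 : x - w - y - w' - z
      exact p5F h1 h2 mx mw my mw' mz dwx.symm dxy dwx'.symm dxz dwy hne dwz
        dwy'.symm dyz dwz'
        (csw c x w)
        ((hBval w hw).1.1.symm)
        (by rw [csw c y w']; exact (hBval w' hw').1.1.symm.trans heq.symm)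
        ((hBval w' hw').1.2.symm.trans ((hBval w' hw').1.1.symm.trans heq.symm))
    have hle := Finset.card_le_card_of_injOn _ hmap hinj
    have hBcard : W.card ≤ B.card + A.card := by
      rw [hBdef]
      exact Finset.card_le_card_sdiff_add_card
    rw [Finset.card_erase_of_mem hgT] at hle
    have hT1 : 1 ≤ T.card := Finset.card_pos.2 ⟨g, hgT⟩
    omega

set_option maxHeartbeats 2000000 in
/-- Given a monochromatic path on four vertices in a color of `T`, contradiction. -/
lemma p4F (hNR : ¬hasRainbowTriangle c)
    (h1 : ∀ j ∈ T, ¬P5In c S j) (h2 : ∀ j, j ∉ T → ¬P3In c S j)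
    (hcard : T.card + 4 ≤ S.card)
    {j : Fin k} (hj : j ∈ T) {a b d e : Fin n}
    (ma : a ∈ S) (mb : b ∈ S) (md : d ∈ S) (me : e ∈ S)
    (dab : a ≠ b) (dad : a ≠ d) (dae : a ≠ e) (dbd : b ≠ d) (dbe : b ≠ e) (dde : d ≠ e)
    (e1 : c s(a, b) = j) (e2 : c s(b, d) = j) (e3 : c s(d, e) = j) : False := by
  set W : Finset (Fin n) := S \ ({a, b, d, e} : Finset (Fin n)) with hWdef
  have hsub := quadSub ma mb md me dab dad dae dbd dbe dde
  have hWcard : W.card = S.card - 4 := by rw [hWdef, Finset.card_sdiff_of_subset hsub.1, hsub.2]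
  -- basic facts for every outside vertex
  have hFa : ∀ u ∈ W, c s(u, a) ≠ j := by
    intro u hu h
    obtain ⟨mu, dua, dub, dud, due⟩ := memW hu
    exact p5F h1 h2 mu ma mb md me dua dub dud due dab dad dae dbd dbe dde h e1 e2 e3
  have hFe : ∀ u ∈ W, c s(u, e) ≠ j := by
    intro u hu h
    obtain ⟨mu, dua, dub, dud, due⟩ := memW hu
    exact p5F h1 h2 mu me md mb ma due dud dub dua dde.symm dbe.symm dae.symm dbd.symm
      dad.symm dab.symm h (by rw [csw c e d]; exact e3) (by rw [csw c d b]; exact e2)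
      (by rw [csw c b a]; exact e1)
  have hFbd : ∀ u ∈ W, c s(u, b) = j → c s(u, d) = j → False := by
    intro u hu hub hud
    obtain ⟨mu, dua, dub, dud, due⟩ := memW hu
    exact triF hNR h1 h2 hcard mu mb md dub dud dbd hub e2 hud
  have hBall : ∀ u ∈ W, c s(u, b) ≠ j → c s(u, d) ≠ j →
      c s(u, a) = c s(u, b) ∧ c s(u, b) = c s(u, d) ∧ c s(u, d) = c s(u, e) := by
    intro u hu hub hud
    obtain ⟨mu, dua, dub, dud, due⟩ := memW hu
    refine ⟨?_, ?_, ?_⟩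
    · rcases nr hNR dua dub dab with h | h | h
      · exact h
      · exact absurd (h.trans e1) (hFa u hu)
      · exact absurd (h.trans e1) hub
    · rcases nr hNR dub dud dbd with h | h | h
      · exact h
      · exact absurd (h.trans e2) hub
      · exact absurd (h.trans e2) hud
    · rcases nr hNR dud due dde with h | h | h
      · exact h
      · exact absurd (h.trans e3) hud
      · exact absurd (h.trans e3) (hFe u hu)
  have hAb : ∀ u ∈ W, c s(u, b) = j → c s(u, d) = c s(u, e) := by
    intro u hu hub
    obtain ⟨mu, dua, dub, dud, due⟩ := memW hu
    rcases nr hNR dud due dde with h | h | h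
    · exact h
    · exact absurd (h.trans e3) (fun hh => hFbd u hu hub hh)
    · exact absurd (h.trans e3) (hFe u hu)
  have hAc : ∀ u ∈ W, c s(u, d) = j → c s(u, a) = c s(u, b) := by
    intro u hu hud
    obtain ⟨mu, dua, dub, dud, due⟩ := memW hu
    rcases nr hNR dua dub dab with h | h | h
    · exact h
    · exact absurd (h.trans e1) (hFa u hu)
    · exact absurd (h.trans e1) (fun hh => hFbd u hu hh hud)
  have hnojb : ∀ u ∈ W, c s(u, b) = j → ∀ v, v ∈ S → v ≠ u → v ≠ b → v ≠ d → v ≠ e →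
      c s(u, v) ≠ j := by
    intro u hu hub v mv dvu dvb dvd dve h
    obtain ⟨mu, dua, dub, dud, due⟩ := memW hu
    exact p5F h1 h2 mv mu mb md me dvu dvb dvd dve dub dud due dbd dbe dde
      (by rw [csw c v u]; exact h) hub e2 e3
  have hnojc : ∀ u ∈ W, c s(u, d) = j → ∀ v, v ∈ S → v ≠ u → v ≠ a → v ≠ b → v ≠ d →
      c s(u, v) ≠ j := by
    intro u hu hud v mv dvu dva dvb dvd h
    obtain ⟨mu, dua, dub, dud, due⟩ := memW hu
    exact p5F h1 h2 mv mu md mb ma dvu dvd dvb dva dud dub dua dbd.symm dad.symm dab.symm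
      (by rw [csw c v u]; exact h) hud (by rw [csw c d b]; exact e2)
      (by rw [csw c b a]; exact e1)
  have hinjAb : ∀ u ∈ W, ∀ u' ∈ W, u ≠ u' → c s(u, b) = j → c s(u', b) = j →
      c s(u, d) = c s(u', d) → False := by
    intro u hu u' hu' hne hub hub' heq
    obtain ⟨mu, dua, dub, dud, due⟩ := memW hu
    obtain ⟨mu', dua', dub', dud', due'⟩ := memW hu'
    -- C4 u - d - u' - e in color c s(u,d)
    exact c4F hNR h1 h2 hcard mu md mu' me dud hne due dud'.symm dde due'
      rfl (by rw [csw c d u']; exact heq.symm)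
      ((hAb u' hu' hub').symm.trans heq.symm)
      (by rw [csw c e u]; exact (hAb u hu hub).symm)
  have hinjAc : ∀ u ∈ W, ∀ u' ∈ W, u ≠ u' → c s(u, d) = j → c s(u', d) = j →
      c s(u, a) = c s(u', a) → False := by
    intro u hu u' hu' hne hud hud' heq
    obtain ⟨mu, dua, dub, dud, due⟩ := memW hu
    obtain ⟨mu', dua', dub', dud', due'⟩ := memW hu'
    -- C4 u - a - u' - b in color c s(u,a)
    exact c4F hNR h1 h2 hcard mu ma mu' mb dua hne dub dua'.symm dab dub'
      rfl (by rw [csw c a u']; exact heq.symm)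
      ((hAc u' hu' hud').symm.trans heq.symm)
      (by rw [csw c b u]; exact (hAc u hu hud).symm)
  have hinjB : ∀ u ∈ W, ∀ u' ∈ W, u ≠ u' → c s(u, b) ≠ j → c s(u, d) ≠ j →
      c s(u', b) ≠ j → c s(u', d) ≠ j → c s(u, a) = c s(u', a) → False := by
    intro u hu u' hu' hne hub hud hub' hud' heq
    obtain ⟨mu, dua, dub, dud, due⟩ := memW hu
    obtain ⟨mu', dua', dub', dud', due'⟩ := memW hu'
    -- P5 a - u - b - u' - d in color c s(u,a)
    exact p5F h1 h2 ma mu mb mu' md dua.symm dab dua'.symm dad dub hne dud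
      dub'.symm dbd dud'
      (csw c a u) ((hBall u hu hub hud).1.symm)
      (by rw [csw c b u']; exact (hBall u' hu' hub' hud').1.symm.trans heq.symm)
      (((hBall u' hu' hub' hud').1.trans (hBall u' hu' hub' hud').2.1).symm.trans heq.symm)
  have hcrossBb : ∀ u ∈ W, ∀ u' ∈ W, u ≠ u' → c s(u, b) = j → c s(u', b) ≠ j →
      c s(u', d) ≠ j → c s(u, d) = c s(u', a) → False := by
    intro u hu u' hu' hne hub hub' hud' heq
    obtain ⟨mu, dua, dub, dud, due⟩ := memW hu
    obtain ⟨mu', dua', dub', dud', due'⟩ := memW hu'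
    have full : c s(u', a) = c s(u', e) :=
      (hBall u' hu' hub' hud').1.trans ((hBall u' hu' hub' hud').2.1.trans
        (hBall u' hu' hub' hud').2.2)
    -- P5 a - u' - e - u - d in color c s(u',a)
    exact p5F h1 h2 ma mu' me mu md dua'.symm dae dua.symm dad due' (Ne.symm hne)
      dud' due.symm dde.symm dud
      (csw c a u') full.symm
      (by rw [csw c e u]; exact (hAb u hu hub).symm.trans heq)
      heq
  have hcrossBc : ∀ u ∈ W, ∀ u' ∈ W, u ≠ u' → c s(u, d) = j → c s(u', b) ≠ j →
      c s(u', d) ≠ j → c s(u, a) = c s(u', a) → False := by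
    intro u hu u' hu' hne hud hub' hud' heq
    obtain ⟨mu, dua, dub, dud, due⟩ := memW hu
    obtain ⟨mu', dua', dub', dud', due'⟩ := memW hu'
    have full : c s(u', a) = c s(u', e) :=
      (hBall u' hu' hub' hud').1.trans ((hBall u' hu' hub' hud').2.1.trans
        (hBall u' hu' hub' hud').2.2)
    -- P5 e - u' - a - u - b in color c s(u',a)
    exact p5F h1 h2 me mu' ma mu mb due'.symm dae.symm due.symm dbe.symm dua' (Ne.symm hne)
      dub' dua.symm dab dub
      (by rw [csw c e u']; exact full.symm) rfl
      (by rw [csw c a u]; exact heq)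
      ((hAc u hu hud).symm.trans heq)
  -- the classifying map
  set ψ : Fin n → Fin k := fun u => if c s(u, b) = j then c s(u, d) else c s(u, a)
    with hψdef
  have hmapT : ∀ u ∈ W, ψ u ∈ T.erase j := by
    intro u hu
    obtain ⟨mu, dua, dub, dud, due⟩ := memW hu
    simp only [hψdef]
    by_cases hub : c s(u, b) = j
    · rw [if_pos hub]
      refine Finset.mem_erase.2 ⟨fun hh => hFbd u hu hub hh, ?_⟩
      exact adjT h2 mu md me dud due dde (hAb u hu hub)
    · rw [if_neg hub]
      refine Finset.mem_erase.2 ⟨hFa u hu, ?_⟩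
      by_cases hud : c s(u, d) = j
      · exact adjT h2 mu ma mb dua dub dab (hAc u hu hud)
      · exact adjT h2 mu ma mb dua dub dab (hBall u hu hub hud).1
  by_cases hmix : ∃ u ∈ W, ∃ u' ∈ W, c s(u, b) = j ∧ c s(u', d) = j ∧
      c s(u, d) = c s(u', a)
  · -- there is a mixed pair (w, w') with common color f
    obtain ⟨w, hwW, w', hw'W, hwb, hw'd, hf⟩ := hmix
    obtain ⟨mw, dwa, dwb, dwd, dwe⟩ := memW hwW
    obtain ⟨mw', dwa', dwb', dwd', dwe'⟩ := memW hw'W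
    have hfj : c s(w, d) ≠ j := fun hh => hFbd w hwW hwb hh
    have dne : w ≠ w' := by
      intro hh; rw [hh] at hfj; exact hfj hw'd
    have ew'a : c s(w', a) = c s(w, d) := hf.symm
    have ew'b : c s(w', b) = c s(w, d) := (hAc w' hw'W hw'd).symm.trans ew'a
    have ewe : c s(w, e) = c s(w, d) := (hAb w hwW hwb).symm
    have hww' : c s(w, w') = c s(w, d) := by
      rcases nr hNR dne dwd dwd' with h | h | h
      · exact h
      · exact absurd h (fun hh => hnojb w hwW hwb w' mw' dne.symm dwb' dwd' dwe'
          (hh.trans hw'd))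
      · exact absurd (h.trans hw'd) hfj
    -- the blocked color h = c s(w,a)
    have hhj : c s(w, a) ≠ j := hFa w hwW
    have hne_hf : c s(w, a) ≠ c s(w, d) := by
      intro heq
      -- P5 b - w' - a - w - d in color c s(w,d)
      exact p5F h1 h2 mb mw' ma mw md dwb'.symm dab.symm dwb.symm dbd dwa' dne.symm
        dwd' dwa.symm dad dwd
        (by rw [csw c b w']; exact ew'b) ew'a
        (by rw [csw c a w]; exact heq) rfl
    have ead : c s(a, d) = c s(w, a) := by
      rcases nr hNR dwa.symm dad dwd with h | h | h
      · exact h.symm.trans (csw c a w)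
      · exact absurd ((csw c w a).trans h) hne_hf
      · exfalso
        -- P5 d - a - w' - w - e in color c s(w,d)
        exact p5F h1 h2 md ma mw' mw me dad.symm dwd'.symm dwd.symm dde dwa'.symm dwa.symm
          dae dne.symm dwe' dwe
          (by rw [csw c d a]; exact h) (by rw [csw c a w']; exact ew'a)
          (by rw [csw c w' w]; exact hww') ewe
    have eae : c s(a, e) = c s(w, a) := by
      rcases nr hNR dwa.symm dae dwe with h | h | h
      · exact h.symm.trans (csw c a w)
      · exact absurd ((csw c w a).trans (h.trans ewe)) hne_hf
      · exfalso
        -- P5 e - a - w' - w - d in color c s(w,d)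
        exact p5F h1 h2 me ma mw' mw md dae.symm dwe'.symm dwe.symm dde.symm dwa'.symm
          dwa.symm dad dne.symm dwd' dwd
          (by rw [csw c e a]; exact h.trans ewe) (by rw [csw c a w']; exact ew'a)
          (by rw [csw c w' w]; exact hww') rfl
    have ew'e : c s(w', e) = c s(w, a) := by
      rcases nr hNR dwa' dwe' dae with h | h | h
      · exfalso
        -- triangle w, w', e in color c s(w,d)
        exact triF hNR h1 h2 hcard mw mw' me dne dwe dwe' hww'
          (h.symm.trans ew'a) ewe
      · exact absurd (h.trans eae) (fun hh => hne_hf (ew'a.symm.trans hh).symm)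
      · exact h.trans eae
    have ebe : c s(b, e) = c s(w, a) := by
      rcases nr hNR dwb' dwe' dbe with h | h | h
      · exact absurd (ew'e.symm.trans (h.symm.trans ew'b)) hne_hf
      · exfalso
        -- P5 b - e - w - w' - a in color c s(w,d)
        exact p5F h1 h2 mb me mw mw' ma dbe dwb.symm dwb'.symm dab.symm dwe.symm
          dwe'.symm dae.symm dne dwa dwa'
          (ew'b.symm.trans h).symm (by rw [csw c e w]; exact ewe) hww' ew'a
      · exact h.symm.trans ew'e
    have hhT : c s(w, a) ∈ T.erase j := by
      refine Finset.mem_erase.2 ⟨hhj, ?_⟩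
      have hT := adjT h2 ma mw md dwa.symm dad dwd ((csw c a w).trans ead.symm)
      rwa [csw c a w] at hT
    -- exclusions : no other vertex uses color h
    have hexB : ∀ u ∈ W, u ≠ w → u ≠ w' → c s(u, b) ≠ j → c s(u, d) ≠ j →
        c s(u, a) ≠ c s(w, a) := by
      intro u hu hnw hnw' hub hud heq
      obtain ⟨mu, dua, dub, dud, due⟩ := memW hu
      have full : c s(u, a) = c s(u, e) :=
        (hBall u hu hub hud).1.trans ((hBall u hu hub hud).2.1.trans
          (hBall u hu hub hud).2.2)
      -- P5 w - a - u - e - w' in color c s(w,a)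
      exact p5F h1 h2 mw ma mu me mw' dwa (Ne.symm hnw) dwe dne dua.symm dae dwa'.symm
        due hnw' dwe'.symm
        rfl (by rw [csw c a u]; exact heq) (full.symm.trans heq)
        (by rw [csw c e w']; exact ew'e)
    have hexAb : ∀ u ∈ W, u ≠ w → c s(u, b) = j → c s(u, d) ≠ c s(w, a) := by
      intro u hu hnw hub heq
      obtain ⟨mu, dua, dub, dud, due⟩ := memW hu
      -- P5 w - a - d - u - e in color c s(w,a)
      exact p5F h1 h2 mw ma md mu me dwa dwd (Ne.symm hnw) dwe dad dua.symm dae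
        dud.symm dde due
        rfl ead (by rw [csw c d u]; exact heq) ((hAb u hu hub).symm.trans heq)
    have hexAc : ∀ u ∈ W, u ≠ w' → c s(u, d) = j → c s(u, a) ≠ c s(w, a) := by
      intro u hu hnw' hud heq
      obtain ⟨mu, dua, dub, dud, due⟩ := memW hu
      have hnw : u ≠ w := by
        intro hh; rw [hh] at hud; exact hfj hud
      -- P5 w - a - u - b - e in color c s(w,a)
      exact p5F h1 h2 mw ma mu mb me dwa (Ne.symm hnw) dwb dwe dua.symm dab dae
        dub due dbe
        rfl (by rw [csw c a u]; exact heq) ((hAc u hu hud).symm.trans heq) ebe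
    have hmix2 : ∀ u ∈ W, ∀ u' ∈ W, c s(u, b) = j → c s(u', d) = j →
        c s(u, d) = c s(u', a) → c s(u, d) ≠ c s(w, d) → False := by
      intro u hu u' hu' hub hu'd hf' hvne
      obtain ⟨mu, dua, dub, dud, due⟩ := memW hu
      obtain ⟨mu', dua', dub', dud', due'⟩ := memW hu'
      have hf'j : c s(u, d) ≠ j := fun hh => hFbd u hu hub hh
      have dnuw : u ≠ w := fun hh => hvne (by rw [hh])
      have dnu'w' : u' ≠ w' := by
        intro hh; subst hh; exact hvne (hf'.trans ew'a)
      have dnu'u : u' ≠ u := by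
        intro hh; rw [hh] at hu'd; exact hFbd u hu hub hu'd
      have dnuw' : u ≠ w' := by
        intro hh; subst hh; exact hfj (ew'b.symm.trans hub)
      have dnu'w : u' ≠ w := by
        intro hh; rw [hh] at hu'd; exact hfj hu'd
      have ewu' : c s(w, u') = c s(w, d) := by
        rcases nr hNR (Ne.symm dnu'w) dwd dud' with h | h | h
        · exact h
        · exact absurd (h.trans hu'd) (hnojb w hwW hwb u' mu' dnu'w dub' dud' due')
        · exact absurd (h.trans hu'd) hfj
      have euw' : c s(u, w') = c s(u, d) := by
        rcases nr hNR dnuw' dud dwd' with h | h | h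
        · exact h
        · exact absurd (h.trans hw'd)
            (hnojb u hu hub w' mw' (Ne.symm dnuw') dwb' dwd' dwe')
        · exact absurd (h.trans hw'd) hf'j
      rcases nr hNR (Ne.symm dnu'w') dwa' dua' with h | h | h
      · -- P5 d - w - u' - w' - a in color c s(w,d)
        exact p5F h1 h2 md mw mu' mw' ma dwd.symm (Ne.symm dud') dwd'.symm dad.symm
          (Ne.symm dnu'w) dne dwa dnu'w' dua' dwa'
          (csw c d w) ewu' (by rw [csw c u' w']; exact h.trans ew'a) ew'a
      · -- P5 d - u - w' - u' - a in color c s(u,d)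
        exact p5F h1 h2 md mu mw' mu' ma dud.symm dwd'.symm (Ne.symm dud') dad.symm
          dnuw' (Ne.symm dnu'u) dua (Ne.symm dnu'w') dwa' dua'
          (csw c d u) euw' (h.trans hf'.symm) hf'.symm
      · exact hvne (hf'.trans (h.symm.trans ew'a))
    -- counting : W.erase w injects into (T.erase j).erase (c s(w,a))
    have hmap2 : ∀ u ∈ W.erase w, ψ u ∈ (T.erase j).erase (c s(w, a)) := by
      intro u hu
      obtain ⟨hnw, huW⟩ := Finset.mem_erase.1 hu
      refine Finset.mem_erase.2 ⟨?_, hmapT u huW⟩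
      simp only [hψdef]
      by_cases hub : c s(u, b) = j
      · rw [if_pos hub]; exact hexAb u huW hnw hub
      · rw [if_neg hub]
        by_cases hud : c s(u, d) = j
        · by_cases hnw' : u = w'
          · subst hnw'
            exact fun hh => hne_hf (ew'a.symm.trans hh).symm
          · exact hexAc u huW hnw' hud
        · have hnw'B : u ≠ w' := fun hh => by subst hh; exact hud hw'd
          exact hexB u huW hnw hnw'B hub hud
    have hinj2 : Set.InjOn ψ (W.erase w) := by
      intro u hu u' hu' heq
      by_contra hne2
      obtain ⟨hnw, huW⟩ := Finset.mem_erase.1 (Finset.mem_coe.1 hu)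
      obtain ⟨hnw', hu'W⟩ := Finset.mem_erase.1 (Finset.mem_coe.1 hu')
      simp only [hψdef] at heq
      by_cases hub : c s(u, b) = j <;> by_cases hub' : c s(u', b) = j
      · rw [if_pos hub, if_pos hub'] at heq
        exact hinjAb u huW u' hu'W hne2 hub hub' heq
      · rw [if_pos hub, if_neg hub'] at heq
        by_cases hud' : c s(u', d) = j
        · by_cases hvf : c s(u, d) = c s(w, d)
          · exact hinjAb u huW w hwW hnw hub hwb hvf
          · exact hmix2 u huW u' hu'W hub hud' heq hvf
        · exact hcrossBb u huW u' hu'W hne2 hub hub' hud' heq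
      · rw [if_neg hub, if_pos hub'] at heq
        by_cases hud : c s(u, d) = j
        · by_cases hvf : c s(u', d) = c s(w, d)
          · exact hinjAb u' hu'W w hwW hnw' hub' hwb hvf
          · exact hmix2 u' hu'W u huW hub' hud heq.symm hvf
        · exact hcrossBb u' hu'W u huW (Ne.symm hne2) hub' hub hud heq.symm
      · rw [if_neg hub, if_neg hub'] at heq
        by_cases hud : c s(u, d) = j <;> by_cases hud' : c s(u', d) = j
        · exact hinjAc u huW u' hu'W hne2 hud hud' heq
        · exact hcrossBc u huW u' hu'W hne2 hud hub' hud' heq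
        · exact hcrossBc u' hu'W u huW (Ne.symm hne2) hud' hub hud heq.symm
        · exact hinjB u huW u' hu'W hne2 hub hud hub' hud' heq
    have hle := Finset.card_le_card_of_injOn _ hmap2 hinj2
    rw [Finset.card_erase_of_mem hwW, Finset.card_erase_of_mem hhT,
      Finset.card_erase_of_mem hj] at hle
    have hT1 : 0 < (T.erase j).card := Finset.card_pos.2 ⟨_, hhT⟩
    rw [Finset.card_erase_of_mem hj] at hT1
    have hW1 : 0 < W.card := Finset.card_pos.2 ⟨w, hwW⟩
    omega
  · push_neg at hmix
    have hinj : Set.InjOn ψ W := by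
      intro u hu u' hu' heq
      by_contra hne2
      have huW : u ∈ W := Finset.mem_coe.1 hu
      have hu'W : u' ∈ W := Finset.mem_coe.1 hu'
      simp only [hψdef] at heq
      by_cases hub : c s(u, b) = j <;> by_cases hub' : c s(u', b) = j
      · rw [if_pos hub, if_pos hub'] at heq
        exact hinjAb u huW u' hu'W hne2 hub hub' heq
      · rw [if_pos hub, if_neg hub'] at heq
        by_cases hud' : c s(u', d) = j
        · exact hmix u huW u' hu'W hub hud' heq
        · exact hcrossBb u huW u' hu'W hne2 hub hub' hud' heq
      · rw [if_neg hub, if_pos hub'] at heq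
        by_cases hud : c s(u, d) = j
        · exact hmix u' hu'W u huW hub' hud heq.symm
        · exact hcrossBb u' hu'W u huW (Ne.symm hne2) hub' hub hud heq.symm
      · rw [if_neg hub, if_neg hub'] at heq
        by_cases hud : c s(u, d) = j <;> by_cases hud' : c s(u', d) = j
        · exact hinjAc u huW u' hu'W hne2 hud hud' heq
        · exact hcrossBc u huW u' hu'W hne2 hud hub' hud' heq
        · exact hcrossBc u' hu'W u huW (Ne.symm hne2) hud' hub hud heq.symm
        · exact hinjB u huW u' hu'W hne2 hub hud hub' hud' heq
    have hle := Finset.card_le_card_of_injOn _ hmapT hinj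
    rw [Finset.card_erase_of_mem hj] at hle
    have hT1 : 1 ≤ T.card := Finset.card_pos.2 ⟨j, hj⟩
    omega

lemma P5mono {S S' : Finset (Fin n)} (hsub : S' ⊆ S) {j : Fin k} (h : P5In c S' j) :
    P5In c S j := by
  obtain ⟨x, y, z, u, v, m1, m2, m3, m4, m5, rest⟩ := h
  exact ⟨x, y, z, u, v, hsub m1, hsub m2, hsub m3, hsub m4, hsub m5, rest⟩

lemma P3mono {S S' : Finset (Fin n)} (hsub : S' ⊆ S) {j : Fin k} (h : P3In c S' j) :
    P3In c S j := by
  obtain ⟨x, y, z, m1, m2, m3, rest⟩ := h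
  exact ⟨x, y, z, hsub m1, hsub m2, hsub m3, rest⟩

lemma coreFalse (c : Sym2 (Fin n) → Fin k) (hNR : ¬hasRainbowTriangle c) :
    ∀ (t : ℕ) (T : Finset (Fin k)) (S : Finset (Fin n)), T.card = t → t + 4 ≤ S.card →
    (∀ j ∈ T, ¬P5In c S j) → (∀ j, j ∉ T → ¬P3In c S j) → False := by
  intro t
  induction t using Nat.strong_induction_on with
  | _ t IH =>
  intro T S hT hS h1 h2
  rcases Nat.eq_zero_or_pos t with ht0 | htpos
  · -- base case : T is empty, any triangle gives a monochromatic P3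
    subst ht0
    have hTe : T = ∅ := Finset.card_eq_zero.1 hT
    obtain ⟨S3, hS3sub, hS3⟩ := Finset.exists_subset_card_eq (show 3 ≤ S.card by omega)
    obtain ⟨x, y, z, hxy, hxz, hyz, rfl⟩ := Finset.card_eq_three.1 hS3
    have mx : x ∈ S := hS3sub (by simp)
    have my : y ∈ S := hS3sub (by simp)
    have mz : z ∈ S := hS3sub (by simp)
    rcases nr hNR hxy hxz hyz with h | h | h
    · have := adjT h2 mx my mz hxy hxz hyz h
      rw [hTe] at this; exact absurd this (Finset.notMem_empty _)
    · have := adjT h2 my mx mz hxy.symm hyz hxz ((csw c y x).trans h)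
      rw [hTe] at this; exact absurd this (Finset.notMem_empty _)
    · have := adjT h2 mz mx my hxz.symm hyz.symm hxy
        ((csw c z x).trans (h.trans (csw c y z)))
      rw [hTe] at this; exact absurd this (Finset.notMem_empty _)
  · by_cases hred : ∃ j ∈ T, ∃ v ∈ S, ∀ x y, x ∈ S → y ∈ S → x ≠ y → c s(x, y) = j →
        (x = v ∨ y = v)
    · -- reduction : remove the star center and the color
      obtain ⟨j, hj, v, hv, hstar⟩ := hred
      refine IH (t - 1) (by omega) (T.erase j) (S.erase v) ?_ ?_ ?_ ?_
      · rw [Finset.card_erase_of_mem hj, hT]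
      · rw [Finset.card_erase_of_mem hv]; omega
      · intro j' hj' hP
        exact h1 j' (Finset.mem_of_mem_erase hj') (P5mono (Finset.erase_subset _ _) hP)
      · intro j' hj' hP
        by_cases hjT : j' ∈ T
        · have hjj : j' = j := by
            by_contra hh; exact hj' (Finset.mem_erase.2 ⟨hh, hjT⟩)
          subst hjj
          obtain ⟨x, y, z, mx, my, mz, dxy, dxz, dyz, ex, ey⟩ := hP
          obtain ⟨hxv, hxS⟩ := Finset.mem_erase.1 mx
          obtain ⟨hyv, hyS⟩ := Finset.mem_erase.1 my
          rcases hstar x y hxS hyS dxy ex with h | h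
          · exact hxv h
          · exact hyv h
        · exact h2 j' hjT (P3mono (Finset.erase_subset _ _) hP)
    · push_neg at hred
      obtain ⟨j, hj⟩ := Finset.card_pos.1 (show 0 < T.card by omega)
      have hcard : T.card + 4 ≤ S.card := by omega
      have pairCase : ∀ a b x y : Fin n, a ∈ S → b ∈ S → x ∈ S → y ∈ S →
          a ≠ b → a ≠ x → a ≠ y → b ≠ x → b ≠ y → x ≠ y →
          c s(a, b) = j → c s(x, y) = j → False := by
        intro a b x y ma mb mx my dab dax day dbx dby dxy eab exy
        by_cases hbx : c s(b, x) = j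
        · exact p4F hNR h1 h2 hcard hj ma mb mx my dab dax day dbx dby dxy eab hbx exy
        by_cases hby : c s(b, y) = j
        · exact p4F hNR h1 h2 hcard hj ma mb my mx dab day dax dby dbx dxy.symm eab hby
            (by rw [csw c y x]; exact exy)
        by_cases hax : c s(a, x) = j
        · exact p4F hNR h1 h2 hcard hj mb ma mx my dab.symm dbx dby dax day dxy
            (by rw [csw c b a]; exact eab) hax exy
        by_cases hay : c s(a, y) = j
        · exact p4F hNR h1 h2 hcard hj mb ma my mx dab.symm dby dbx day dax dxy.symm
            (by rw [csw c b a]; exact eab) hay (by rw [csw c y x]; exact exy)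
        -- all four cross edges have a common color p, giving a C4
        have haxy : c s(a, x) = c s(a, y) := by
          rcases nr hNR dax day dxy with h | h | h
          · exact h
          · exact absurd (h.trans exy) hax
          · exact absurd (h.trans exy) hay
        have hbxy : c s(b, x) = c s(b, y) := by
          rcases nr hNR dbx dby dxy with h | h | h
          · exact h
          · exact absurd (h.trans exy) hbx
          · exact absurd (h.trans exy) hby
        have hxab : c s(x, a) = c s(x, b) := by
          rcases nr hNR dax.symm dbx.symm dab with h | h | h
          · exact h
          · exact absurd ((csw c a x).trans (h.trans eab)) hax
          · exact absurd ((csw c b x).trans (h.trans eab)) hbx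
        -- C4 : a - x - b - y in color c s(a,x)
        exact c4F hNR h1 h2 hcard ma mx mb my dax dab day dbx.symm dxy dby
          rfl (hxab.symm.trans (csw c x a))
          (hbxy.symm.trans ((csw c b x).trans (hxab.symm.trans (csw c x a))))
          ((csw c y a).trans haxy.symm)
      obtain ⟨v0, hv0⟩ := Finset.card_pos.1 (show 0 < S.card by omega)
      obtain ⟨a, b, ma, mb, dab, eab, -, -⟩ := hred j hj v0 hv0
      have P3case : ∀ z, z ∈ S → z ≠ a → z ≠ b → c s(b, z) = j → False := by
        intro z mz dza dzb ez
        obtain ⟨x2, y2, mx2, my2, dxy2, exy2, hx2b, hy2b⟩ := hred j hj b mb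
        by_cases ha2 : x2 = a ∨ y2 = a
        · -- an edge at a avoiding b : a - w
          have hw : ∃ w, w ∈ S ∧ w ≠ a ∧ w ≠ b ∧ c s(a, w) = j := by
            rcases ha2 with h | h
            · subst h
              exact ⟨y2, my2, fun hh => dxy2 hh.symm, hy2b, exy2⟩
            · rw [h] at dxy2 exy2
              exact ⟨x2, mx2, dxy2, hx2b, (csw c a x2).trans exy2⟩
          obtain ⟨w, mw, dwa, dwb, ew⟩ := hw
          by_cases hwz : w = z
          · subst hwz
            exact triF hNR h1 h2 hcard ma mb mw dab dwa.symm dzb.symm eab ez ew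
          · -- P4 : w - a - b - z
            exact p4F hNR h1 h2 hcard hj mw ma mb mz dwa dwb hwz dab dza.symm dzb.symm
              (by rw [csw c w a]; exact ew) eab ez
        · push_neg at ha2
          by_cases hz2 : x2 = z ∨ y2 = z
          · -- an edge at z avoiding b : z - w
            have hw : ∃ w, w ∈ S ∧ w ≠ z ∧ w ≠ b ∧ c s(z, w) = j := by
              rcases hz2 with h | h
              · subst h
                exact ⟨y2, my2, fun hh => (dxy2 hh.symm), hy2b,
                  exy2⟩
              · rw [h] at dxy2 exy2
                exact ⟨x2, mx2, dxy2, hx2b, by rw [csw c z x2]; exact exy2⟩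
            obtain ⟨w, mw, dwz, dwb, ew⟩ := hw
            by_cases hwa : w = a
            · rw [hwa] at ew
              exact triF hNR h1 h2 hcard ma mb mz dab dza.symm dzb.symm eab ez
                (by rw [csw c a z]; exact ew)
            · -- P4 : a - b - z - w
              exact p4F hNR h1 h2 hcard hj ma mb mz mw dab dza.symm (Ne.symm hwa)
                dzb.symm dwb.symm dwz.symm eab ez ew
          · push_neg at hz2
            -- disjoint pair (b,z) and (x2,y2)
            exact pairCase b z x2 y2 mb mz mx2 my2 dzb.symm (Ne.symm hx2b)
              (Ne.symm hy2b) (Ne.symm hz2.1) (Ne.symm hz2.2) dxy2 ez exy2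
      obtain ⟨x1, y1, mx1, my1, dxy1, exy1, hx1a, hy1a⟩ := hred j hj a ma
      by_cases hb1 : x1 = b ∨ y1 = b
      · rcases hb1 with h | h
        · rw [h] at dxy1 exy1
          exact P3case y1 my1 hy1a dxy1.symm exy1
        · rw [h] at dxy1 exy1
          exact P3case x1 mx1 hx1a dxy1 (by rw [csw c b x1]; exact exy1)
      · push_neg at hb1
        exact pairCase a b x1 y1 ma mb mx1 my1 dab (Ne.symm hx1a) (Ne.symm hy1a)
          (Ne.symm hb1.1) (Ne.symm hb1.2) dxy1 eab exy1

lemma P5In_hasMono {S : Finset (Fin n)} {j : Fin k} (h : P5In c S j) :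
    hasMonoPath c 5 j := by
  obtain ⟨x, y, z, u, v, _, _, _, _, _, dxy, dxz, dxu, dxv, dyz, dyu, dyv, dzu, dzv, duv,
    e1, e2, e3, e4⟩ := h
  refine ⟨![x, y, z, u, v], ?_, ?_⟩
  · intro i j' hij
    fin_cases i <;> fin_cases j' <;> simp_all
  · intro i hi
    have hi4 : i < 4 := by omega
    interval_cases i
    · exact e1
    · exact e2
    · exact e3
    · exact e4

lemma P3In_hasMono {S : Finset (Fin n)} {j : Fin k} (h : P3In c S j) :
    hasMonoPath c 3 j := by
  obtain ⟨x, y, z, _, _, _, dxy, dxz, dyz, e1, e2⟩ := h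
  refine ⟨![x, y, z], ?_, ?_⟩
  · intro i j' hij
    fin_cases i <;> fin_cases j' <;> simp_all
  · intro i hi
    have hi2 : i < 2 := by omega
    interval_cases i
    · exact e1
    · exact e2

/-- For `k ≥ 2` and `0 ≤ t ≤ k`, `gr_k(K_3 : t·P₅, (k−t)·P₃) ≤ t + 4`: every coloring of
`K_n` with colors `Fin k` for `n ≥ t + 4` contains a rainbow triangle, or a monochromatic
`P₅` in one of the first `t` colors, or a monochromatic `P₃` in one of the remaining
`k - t` colors. -/
theorem gallai_ramsey_P5_P3 (k t : ℕ) (hk : 2 ≤ k) (ht : t ≤ k)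
    (n : ℕ) (hn : t + 4 ≤ n) (c : Sym2 (Fin n) → Fin k) :
    hasRainbowTriangle c ∨
    (∃ j : Fin k, j.val < t ∧ hasMonoPath c 5 j) ∨
    (∃ j : Fin k, t ≤ j.val ∧ hasMonoPath c 3 j) := by
  by_contra H
  push_neg at H
  obtain ⟨hR, hP5, hP3⟩ := H
  set T : Finset (Fin k) := Finset.univ.map (Fin.castLEEmb ht) with hTdef
  have hTmem : ∀ j : Fin k, j ∈ T ↔ j.val < t := by
    intro j
    constructor
    · intro hjT
      rw [hTdef, Finset.mem_map] at hjT
      obtain ⟨i, _, hi⟩ := hjT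
      rw [← hi]
      exact i.isLt
    · intro hjt
      rw [hTdef, Finset.mem_map]
      exact ⟨⟨j.val, hjt⟩, Finset.mem_univ _, by ext; rfl⟩
  have hTcard : T.card = t := by
    rw [hTdef, Finset.card_map, Finset.card_univ, Fintype.card_fin]

  exact coreFalse c hR t T Finset.univ hTcard
    (by simpa using hn)
    (fun j hjT hP => hP5 j ((hTmem j).1 hjT) (P5In_hasMono hP))
    (fun j hjT hP => hP3 j (le_of_not_gt fun hlt => hjT ((hTmem j).2 hlt))
      (P3In_hasMono hP))
end

section
/- R({C_4, P_5}, {C_4, P_5}) = 5. That is, every edge-coloring of the complete graph K_5 with two colors contains a monochromatic copy of the cycle C_4 or a monochromatic copy of the path P_5, and there exists a 2-edge-coloring of K_4 containing neither a monochromatic C_4 nor a monochromatic P_5. -/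
/-- Index of an (unordered) edge of `K₅` among the ten edges. -/
def eidx (a b : Fin 5) : Fin 10 :=
  ⟨(min a.val b.val * 4 - min a.val b.val * (min a.val b.val - 1) / 2
      + (max a.val b.val - min a.val b.val - 1)) % 10, Nat.mod_lt _ (by norm_num)⟩

def idx : Sym2 (Fin 5) → Fin 10 := Sym2.lift ⟨eidx, by decide⟩

def edges : Fin 10 → Sym2 (Fin 5) :=
  ![s(0,1), s(0,2), s(0,3), s(0,4), s(1,2), s(1,3), s(1,4), s(2,3), s(2,4), s(3,4)]

lemma edges_idx : ∀ a b : Fin 5, a ≠ b → edges (idx s(a, b)) = s(a, b) := by decide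

def CL : Fin 15 → (Fin 4 → Fin 5) × (Fin 4 → Fin 10) := ![
  (![0,1,2,3], ![0,4,7,2]),
  (![0,1,3,2], ![0,5,7,1]),
  (![0,2,1,3], ![1,4,5,2]),
  (![0,1,2,4], ![0,4,8,3]),
  (![0,1,4,2], ![0,6,8,1]),
  (![0,2,1,4], ![1,4,6,3]),
  (![0,1,3,4], ![0,5,9,3]),
  (![0,1,4,3], ![0,6,9,2]),
  (![0,3,1,4], ![2,5,6,3]),
  (![0,2,3,4], ![1,7,9,3]),
  (![0,2,4,3], ![1,8,9,2]),
  (![0,3,2,4], ![2,7,8,3]),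
  (![1,2,3,4], ![4,7,9,6]),
  (![1,2,4,3], ![4,8,9,5]),
  (![1,3,2,4], ![5,7,8,6])]

def PL : Fin 60 → (Fin 5 → Fin 5) × (Fin 4 → Fin 10) := ![
  (![0,1,2,3,4], ![0,4,7,9]),
  (![0,1,2,4,3], ![0,4,8,9]),
  (![0,1,3,2,4], ![0,5,7,8]),
  (![0,1,3,4,2], ![0,5,9,8]),
  (![0,1,4,2,3], ![0,6,8,7]),
  (![0,1,4,3,2], ![0,6,9,7]),
  (![0,2,1,3,4], ![1,4,5,9]),
  (![0,2,1,4,3], ![1,4,6,9]),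
  (![0,2,3,1,4], ![1,7,5,6]),
  (![0,2,3,4,1], ![1,7,9,6]),
  (![0,2,4,1,3], ![1,8,6,5]),
  (![0,2,4,3,1], ![1,8,9,5]),
  (![0,3,1,2,4], ![2,5,4,8]),
  (![0,3,1,4,2], ![2,5,6,8]),
  (![0,3,2,1,4], ![2,7,4,6]),
  (![0,3,2,4,1], ![2,7,8,6]),
  (![0,3,4,1,2], ![2,9,6,4]),
  (![0,3,4,2,1], ![2,9,8,4]),
  (![0,4,1,2,3], ![3,6,4,7]),
  (![0,4,1,3,2], ![3,6,5,7]),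
  (![0,4,2,1,3], ![3,8,4,5]),
  (![0,4,2,3,1], ![3,8,7,5]),
  (![0,4,3,1,2], ![3,9,5,4]),
  (![0,4,3,2,1], ![3,9,7,4]),
  (![1,0,2,3,4], ![0,1,7,9]),
  (![1,0,2,4,3], ![0,1,8,9]),
  (![1,0,3,2,4], ![0,2,7,8]),
  (![1,0,3,4,2], ![0,2,9,8]),
  (![1,0,4,2,3], ![0,3,8,7]),
  (![1,0,4,3,2], ![0,3,9,7]),
  (![1,2,0,3,4], ![4,1,2,9]),
  (![1,2,0,4,3], ![4,1,3,9]),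
  (![1,2,3,0,4], ![4,7,2,3]),
  (![1,2,4,0,3], ![4,8,3,2]),
  (![1,3,0,2,4], ![5,2,1,8]),
  (![1,3,0,4,2], ![5,2,3,8]),
  (![1,3,2,0,4], ![5,7,1,3]),
  (![1,3,4,0,2], ![5,9,3,1]),
  (![1,4,0,2,3], ![6,3,1,7]),
  (![1,4,0,3,2], ![6,3,2,7]),
  (![1,4,2,0,3], ![6,8,1,2]),
  (![1,4,3,0,2], ![6,9,2,1]),
  (![2,0,1,3,4], ![1,0,5,9]),
  (![2,0,1,4,3], ![1,0,6,9]),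
  (![2,0,3,1,4], ![1,2,5,6]),
  (![2,0,4,1,3], ![1,3,6,5]),
  (![2,1,0,3,4], ![4,0,2,9]),
  (![2,1,0,4,3], ![4,0,3,9]),
  (![2,1,3,0,4], ![4,5,2,3]),
  (![2,1,4,0,3], ![4,6,3,2]),
  (![2,3,0,1,4], ![7,2,0,6]),
  (![2,3,1,0,4], ![7,5,0,3]),
  (![2,4,0,1,3], ![8,3,0,5]),
  (![2,4,1,0,3], ![8,6,0,2]),
  (![3,0,1,2,4], ![2,0,4,8]),
  (![3,0,2,1,4], ![2,1,4,6]),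
  (![3,1,0,2,4], ![5,0,1,8]),
  (![3,1,2,0,4], ![5,4,1,3]),
  (![3,2,0,1,4], ![7,1,0,6]),
  (![3,2,1,0,4], ![7,4,0,3])]

lemma CL_spec : ∀ q : Fin 15, Function.Injective (CL q).1 ∧
    ∀ i : Fin 4, idx s((CL q).1 i, (CL q).1 ⟨(i.val + 1) % 4, Nat.mod_lt _ i.pos⟩)
      = (CL q).2 i := by
  decide +kernel

lemma PL_spec : ∀ q : Fin 60, Function.Injective (PL q).1 ∧
    ∀ i : Fin 4, idx s((PL q).1 ⟨i.val, Nat.lt_of_succ_lt (Nat.succ_lt_succ i.isLt)⟩,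
      (PL q).1 ⟨i.val + 1, Nat.succ_lt_succ i.isLt⟩) = (PL q).2 i := by
  decide +kernel

lemma core : ∀ t : Fin 10 → Fin 2, ∃ j : Fin 2,
    (∃ q : Fin 15, ∀ i : Fin 4, t ((CL q).2 i) = j) ∨
    (∃ q : Fin 60, ∀ i : Fin 4, t ((PL q).2 i) = j) := by
  decide +kernel

lemma succ_ne : ∀ i : Fin 4, i ≠ ⟨(i.val + 1) % 4, Nat.mod_lt _ i.pos⟩ := by decide

lemma K4_no_cycle : ∀ j : Fin 2,
    ¬ ∃ v : Fin 4 → Fin 4, Function.Injective v ∧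
      ∀ i : Fin 4, (fun s => if (3 : Fin 4) ∈ s then (1 : Fin 2) else 0)
        s(v i, v ⟨(i.val + 1) % 4, Nat.mod_lt _ i.pos⟩) = j := by
  decide +kernel

/-- `R({C₄, P₅}, {C₄, P₅}) = 5`: every 2-coloring of the edges of `K₅` contains a
monochromatic `C₄` or a monochromatic `P₅`, and there is a 2-coloring of the edges of
`K₄` containing neither. -/
theorem ramsey_C4_P5 :
    (∀ c : Sym2 (Fin 5) → Fin 2,
      ∃ j : Fin 2, hasMonoCycle c 4 j ∨ hasMonoPath c 5 j) ∧
    (∃ c : Sym2 (Fin 4) → Fin 2,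
      ∀ j : Fin 2, ¬ hasMonoCycle c 4 j ∧ ¬ hasMonoPath c 5 j) := by
  constructor
  · intro c
    obtain ⟨j, h⟩ := core (fun k => c (edges k))
    refine ⟨j, ?_⟩
    rcases h with ⟨q, hm⟩ | ⟨q, hm⟩
    · obtain ⟨hinj, hidx⟩ := CL_spec q
      refine Or.inl ⟨(CL q).1, hinj, fun i => ?_⟩
      have hne : (CL q).1 i ≠ (CL q).1 ⟨(i.val + 1) % 4, Nat.mod_lt _ i.pos⟩ :=
        fun h => succ_ne i (hinj h)
      calc c s((CL q).1 i, (CL q).1 ⟨(i.val + 1) % 4, Nat.mod_lt _ i.pos⟩)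
          = c (edges (idx s((CL q).1 i, (CL q).1 ⟨(i.val + 1) % 4, Nat.mod_lt _ i.pos⟩))) := by
            rw [edges_idx _ _ hne]
        _ = c (edges ((CL q).2 i)) := by rw [hidx i]
        _ = j := hm i
    · obtain ⟨hinj, hidx⟩ := PL_spec q
      refine Or.inr ⟨(PL q).1, hinj, fun i h => ?_⟩
      have h4 : i < 4 := Nat.lt_of_succ_lt_succ h
      have hne : (PL q).1 ⟨i, Nat.lt_of_succ_lt h⟩ ≠ (PL q).1 ⟨i + 1, h⟩ := by
        intro he
        have := hinj he
        simp only [Fin.mk.injEq] at this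
        omega
      calc c s((PL q).1 ⟨i, Nat.lt_of_succ_lt h⟩, (PL q).1 ⟨i + 1, h⟩)
          = c (edges (idx s((PL q).1 ⟨i, Nat.lt_of_succ_lt h⟩, (PL q).1 ⟨i + 1, h⟩))) := by
            rw [edges_idx _ _ hne]
        _ = c (edges ((PL q).2 ⟨i, h4⟩)) := by
            exact congrArg (fun e => c (edges e)) (hidx ⟨i, h4⟩)
        _ = j := hm ⟨i, h4⟩
  · refine ⟨fun s => if (3 : Fin 4) ∈ s then 1 else 0, fun j => ⟨K4_no_cycle j, ?_⟩⟩
    rintro ⟨v, hinj, -⟩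
    have := Fintype.card_le_of_injective v hinj
    simp at this
end

section
/- Let n ≥ 11 and let G be an edge-coloring of K_n with no rainbow triangle, equipped with a Gallai partition in which every part has order at most 3. If the Gallai partition has two parts of order 3 (and hence at least five vertices outside these two parts), then G contains a monochromatic copy of C_8. -/
/-- `P` is a Gallai partition for the coloring `c`: a partition of the vertex set into at
least two parts such that between any two distinct parts all edges get a single color, and
at most two colors total appear between distinct parts. -/
def IsGallaiPartition {n k : ℕ} (c : Sym2 (Fin n) → Fin k)
    (P : Finpartition (Finset.univ : Finset (Fin n))) : Prop :=
  2 ≤ P.parts.card ∧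
  ∃ c1 c2 : Fin k, ∀ A ∈ P.parts, ∀ B ∈ P.parts, A ≠ B →
    (∀ a ∈ A, ∀ b ∈ B, c s(a, b) = c1) ∨ (∀ a ∈ A, ∀ b ∈ B, c s(a, b) = c2)


lemma cswap {n k : ℕ} (c : Sym2 (Fin n) → Fin k) (a b : Fin n) : c s(a,b) = c s(b,a) := by
  rw [Sym2.eq_swap]

lemma exdist2 {α : Type*} [DecidableEq α] (s : Finset α) (h : 2 ≤ s.card) :
    ∃ x ∈ s, ∃ y ∈ s, x ≠ y := Finset.one_lt_card.mp h

lemma exdist3 {α : Type*} [DecidableEq α] (s : Finset α) (h : 3 ≤ s.card) :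
    ∃ x ∈ s, ∃ y ∈ s, ∃ z ∈ s, x ≠ y ∧ x ≠ z ∧ y ≠ z := by
  obtain ⟨t, hts, ht⟩ := Finset.exists_subset_card_eq h
  obtain ⟨x, y, z, hxy, hxz, hyz, rfl⟩ := Finset.card_eq_three.mp ht
  exact ⟨x, hts (by simp), y, hts (by simp), z, hts (by simp), hxy, hxz, hyz⟩

lemma exdist4 {α : Type*} [DecidableEq α] (s : Finset α) (h : 4 ≤ s.card) :
    ∃ x ∈ s, ∃ y ∈ s, ∃ z ∈ s, ∃ w ∈ s,
      x ≠ y ∧ x ≠ z ∧ x ≠ w ∧ y ≠ z ∧ y ≠ w ∧ z ≠ w := by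
  obtain ⟨t, hts, ht⟩ := Finset.exists_subset_card_eq h
  have htne : t.Nonempty := by rw [← Finset.card_pos, ht]; norm_num
  obtain ⟨x, hx⟩ := htne
  have h3 : 3 ≤ (t.erase x).card := by
    rw [Finset.card_erase_of_mem hx, ht]
  obtain ⟨y, hy, z, hz, w, hw, hyz, hyw, hzw⟩ := exdist3 _ h3
  refine ⟨x, hts hx, y, hts (Finset.mem_of_mem_erase hy), z, hts (Finset.mem_of_mem_erase hz),
    w, hts (Finset.mem_of_mem_erase hw), ?_, ?_, ?_, hyz, hyw, hzw⟩
  · exact fun hxy => (Finset.ne_of_mem_erase hy) hxy.symm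
  · exact fun hxz => (Finset.ne_of_mem_erase hz) hxz.symm
  · exact fun hxw => (Finset.ne_of_mem_erase hw) hxw.symm

lemma cycle8 {n k : ℕ} (c : Sym2 (Fin n) → Fin k) (j : Fin k) (v0 v1 v2 v3 v4 v5 v6 v7 : Fin n)
    (d01 : v0 ≠ v1)
    (d02 : v0 ≠ v2)
    (d03 : v0 ≠ v3)
    (d04 : v0 ≠ v4)
    (d05 : v0 ≠ v5)
    (d06 : v0 ≠ v6)
    (d07 : v0 ≠ v7)
    (d12 : v1 ≠ v2)
    (d13 : v1 ≠ v3)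
    (d14 : v1 ≠ v4)
    (d15 : v1 ≠ v5)
    (d16 : v1 ≠ v6)
    (d17 : v1 ≠ v7)
    (d23 : v2 ≠ v3)
    (d24 : v2 ≠ v4)
    (d25 : v2 ≠ v5)
    (d26 : v2 ≠ v6)
    (d27 : v2 ≠ v7)
    (d34 : v3 ≠ v4)
    (d35 : v3 ≠ v5)
    (d36 : v3 ≠ v6)
    (d37 : v3 ≠ v7)
    (d45 : v4 ≠ v5)
    (d46 : v4 ≠ v6)
    (d47 : v4 ≠ v7)
    (d56 : v5 ≠ v6)
    (d57 : v5 ≠ v7)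
    (d67 : v6 ≠ v7)
    (e0 : c s(v0,v1) = j)
    (e1 : c s(v1,v2) = j)
    (e2 : c s(v2,v3) = j)
    (e3 : c s(v3,v4) = j)
    (e4 : c s(v4,v5) = j)
    (e5 : c s(v5,v6) = j)
    (e6 : c s(v6,v7) = j)
    (e7 : c s(v7,v0) = j)
    : hasMonoCycle c 8 j := by
  refine ⟨![v0,v1,v2,v3,v4,v5,v6,v7], ?_, ?_⟩
  · intro i i' h
    fin_cases i <;> fin_cases i'
    · rfl
    · exact absurd h d01
    · exact absurd h d02
    · exact absurd h d03
    · exact absurd h d04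
    · exact absurd h d05
    · exact absurd h d06
    · exact absurd h d07
    · exact absurd h (Ne.symm d01)
    · rfl
    · exact absurd h d12
    · exact absurd h d13
    · exact absurd h d14
    · exact absurd h d15
    · exact absurd h d16
    · exact absurd h d17
    · exact absurd h (Ne.symm d02)
    · exact absurd h (Ne.symm d12)
    · rfl
    · exact absurd h d23
    · exact absurd h d24
    · exact absurd h d25
    · exact absurd h d26
    · exact absurd h d27
    · exact absurd h (Ne.symm d03)
    · exact absurd h (Ne.symm d13)
    · exact absurd h (Ne.symm d23)
    · rfl
    · exact absurd h d34
    · exact absurd h d35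
    · exact absurd h d36
    · exact absurd h d37
    · exact absurd h (Ne.symm d04)
    · exact absurd h (Ne.symm d14)
    · exact absurd h (Ne.symm d24)
    · exact absurd h (Ne.symm d34)
    · rfl
    · exact absurd h d45
    · exact absurd h d46
    · exact absurd h d47
    · exact absurd h (Ne.symm d05)
    · exact absurd h (Ne.symm d15)
    · exact absurd h (Ne.symm d25)
    · exact absurd h (Ne.symm d35)
    · exact absurd h (Ne.symm d45)
    · rfl
    · exact absurd h d56
    · exact absurd h d57
    · exact absurd h (Ne.symm d06)
    · exact absurd h (Ne.symm d16)
    · exact absurd h (Ne.symm d26)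
    · exact absurd h (Ne.symm d36)
    · exact absurd h (Ne.symm d46)
    · exact absurd h (Ne.symm d56)
    · rfl
    · exact absurd h d67
    · exact absurd h (Ne.symm d07)
    · exact absurd h (Ne.symm d17)
    · exact absurd h (Ne.symm d27)
    · exact absurd h (Ne.symm d37)
    · exact absurd h (Ne.symm d47)
    · exact absurd h (Ne.symm d57)
    · exact absurd h (Ne.symm d67)
    · rfl
  · intro i
    fin_cases i
    · exact e0
    · exact e1
    · exact e2
    · exact e3
    · exact e4
    · exact e5
    · exact e6
    · exact e7


lemma L1 {n k : ℕ} (c : Sym2 (Fin n) → Fin k) (red blue : Fin k) (hrb : red ≠ blue)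
    (pt : Fin n → Finset (Fin n))
    (hmem : ∀ v, v ∈ pt v)
    (hpt2 : ∀ u v, u ∈ pt v → pt u = pt v)
    (hcard3 : ∀ v, (pt v).card ≤ 3)
    (hconst : ∀ u v u' v', pt u = pt u' → pt v = pt v' → pt u ≠ pt v → c s(u,v) = c s(u',v'))
    (hdich : ∀ u v, pt u ≠ pt v → c s(u,v) = red ∨ c s(u,v) = blue)
    (A B W : Finset (Fin n))
    (hA3 : A.card = 3) (hB3 : B.card = 3) (hW5 : 5 ≤ W.card)
    (hptA : ∀ a ∈ A, pt a = A) (hptB : ∀ b ∈ B, pt b = B)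
    (hABd : ∀ a ∈ A, a ∉ B)
    (hWd : ∀ w ∈ W, w ∉ A ∧ w ∉ B)
    (hWcl : ∀ w ∈ W, ∀ w' ∈ pt w, w' ∈ W)
    (hAB : ∀ a ∈ A, ∀ b ∈ B, c s(a,b) = red)
    (hblueA : ∀ w ∈ W, ∀ a ∈ A, c s(w,a) = blue) :
    ∃ j : Fin k, hasMonoCycle c 8 j := by
  classical
  obtain ⟨a1, ha1, a2, ha2, a3, ha3, ha12, ha13, ha23⟩ := exdist3 A (by omega)
  obtain ⟨b1, hb1, b2, hb2, b3, hb3, hb12, hb13, hb23⟩ := exdist3 B (by omega)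
  have hABne : A ≠ B := fun h => hABd a1 ha1 (h ▸ ha1)
  have hne_ab : ∀ a ∈ A, ∀ b ∈ B, a ≠ b := fun a ha b hb h => hABd a ha (h ▸ hb)
  have hne_wa : ∀ w ∈ W, ∀ a ∈ A, w ≠ a := fun w hw a ha h => (hWd w hw).1 (h ▸ ha)
  have hne_wb : ∀ w ∈ W, ∀ b ∈ B, w ≠ b := fun w hw b hb h => (hWd w hw).2 (h ▸ hb)
  have hptWA : ∀ w ∈ W, pt w ≠ A := fun w hw h => (hWd w hw).1 (h ▸ hmem w)
  have hptWB : ∀ w ∈ W, pt w ≠ B := fun w hw h => (hWd w hw).2 (h ▸ hmem w)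
  -- color of a W vertex towards all of B, from its color to b1
  have redB : ∀ w ∈ W, c s(w,b1) = red → ∀ b ∈ B, c s(w,b) = red := by
    intro w hw hwr b hb
    have := hconst w b w b1 rfl (by rw [hptB b hb, hptB b1 hb1]) (by rw [hptB b hb]; exact hptWB w hw)
    rw [this, hwr]
  have blueB : ∀ w ∈ W, c s(w,b1) ≠ red → ∀ b ∈ B, c s(w,b) = blue := by
    intro w hw hwr b hb
    have h1 : c s(w,b1) = blue := by
      rcases hdich w b1 (by rw [hptB b1 hb1]; exact hptWB w hw) with h | h
      · exact absurd h hwr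
      · exact h
    have := hconst w b w b1 rfl (by rw [hptB b hb, hptB b1 hb1]) (by rw [hptB b hb]; exact hptWB w hw)
    rw [this, h1]
  -- Step 0 : a blue path on three vertices of W gives a blue C8
  by_cases hP3 : ∃ p ∈ W, ∃ q ∈ W, ∃ r ∈ W, p ≠ q ∧ q ≠ r ∧ p ≠ r ∧
      c s(p,q) = blue ∧ c s(q,r) = blue
  · obtain ⟨p, hp, q, hq, r, hr, hpq, hqr, hpr, hcpq, hcqr⟩ := hP3
    have h2 : 2 ≤ (W \ {p,q,r}).card := by
      have h3 : ({p,q,r} : Finset (Fin n)).card ≤ 3 := by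
        apply le_trans (Finset.card_insert_le _ _)
        simp [Finset.card_insert_le]
        have := Finset.card_insert_le q ({r} : Finset (Fin n))
        simp at this ⊢; omega
      have := Finset.le_card_sdiff ({p,q,r} : Finset (Fin n)) W
      omega
    obtain ⟨w1, hw1, w2, hw2, hw12⟩ := exdist2 _ h2
    rw [Finset.mem_sdiff] at hw1 hw2
    have hw1W := hw1.1; have hw2W := hw2.1
    have hw1pqr : w1 ≠ p ∧ w1 ≠ q ∧ w1 ≠ r := by
      have := hw1.2; simp at this; tauto
    have hw2pqr : w2 ≠ p ∧ w2 ≠ q ∧ w2 ≠ r := by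
      have := hw2.2; simp at this; tauto
    refine ⟨blue, cycle8 c blue a1 w1 a2 w2 a3 p q r ?_ ?_ ?_ ?_ ?_ ?_ ?_ ?_ ?_ ?_ ?_ ?_ ?_
      ?_ ?_ ?_ ?_ ?_ ?_ ?_ ?_ ?_ ?_ ?_ ?_ ?_ ?_ ?_ ?_ ?_ ?_ ?_ ?_ ?_ ?_ ?_⟩
    · exact (hne_wa w1 hw1W a1 ha1).symm
    · exact ha12
    · exact (hne_wa w2 hw2W a1 ha1).symm
    · exact ha13
    · exact (hne_wa p hp a1 ha1).symm
    · exact (hne_wa q hq a1 ha1).symm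
    · exact (hne_wa r hr a1 ha1).symm
    · exact hne_wa w1 hw1W a2 ha2
    · exact hw12
    · exact hne_wa w1 hw1W a3 ha3
    · exact hw1pqr.1
    · exact hw1pqr.2.1
    · exact hw1pqr.2.2
    · exact (hne_wa w2 hw2W a2 ha2).symm
    · exact ha23
    · exact (hne_wa p hp a2 ha2).symm
    · exact (hne_wa q hq a2 ha2).symm
    · exact (hne_wa r hr a2 ha2).symm
    · exact hne_wa w2 hw2W a3 ha3
    · exact hw2pqr.1
    · exact hw2pqr.2.1
    · exact hw2pqr.2.2
    · exact (hne_wa p hp a3 ha3).symm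
    · exact (hne_wa q hq a3 ha3).symm
    · exact (hne_wa r hr a3 ha3).symm
    · exact hpq
    · exact hpr
    · exact hqr
    · exact (cswap c a1 w1).trans (hblueA w1 hw1W a1 ha1)
    · exact hblueA w1 hw1W a2 ha2
    · exact (cswap c a2 w2).trans (hblueA w2 hw2W a2 ha2)
    · exact hblueA w2 hw2W a3 ha3
    · exact (cswap c a3 p).trans (hblueA p hp a3 ha3)
    · exact hcpq
    · exact hcqr
    · exact hblueA r hr a1 ha1
  push_neg at hP3
  -- no blue 2-path in W
  have NB : ∀ p ∈ W, ∀ q ∈ W, ∀ r ∈ W, p ≠ q → q ≠ r → p ≠ r →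
      c s(p,q) = blue → c s(q,r) ≠ blue := by
    intro p hp q hq r hr h1 h2 h3 h4 h5
    exact (hP3 p hp q hq r hr h1 h2 h3 h4) h5
  set Z := W.filter (fun z => ¬ (c s(z, b1) = red)) with hZdef
  by_cases hZ : 4 ≤ Z.card
  · -- four vertices blue to both sides : blue C8
    obtain ⟨z1, hz1, z2, hz2, z3, hz3, z4, hz4, h12, h13, h14, h23, h24, h34⟩ := exdist4 _ hZ
    rw [hZdef, Finset.mem_filter] at hz1 hz2 hz3 hz4
    have bb : ∀ z, z ∈ W → ¬ (c s(z,b1) = red) → ∀ b ∈ B, c s(z,b) = blue := blueB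
    refine ⟨blue, cycle8 c blue a1 z1 b1 z2 a2 z3 b2 z4 ?_ ?_ ?_ ?_ ?_ ?_ ?_ ?_ ?_ ?_ ?_ ?_ ?_
      ?_ ?_ ?_ ?_ ?_ ?_ ?_ ?_ ?_ ?_ ?_ ?_ ?_ ?_ ?_ ?_ ?_ ?_ ?_ ?_ ?_ ?_ ?_⟩
    · exact (hne_wa z1 hz1.1 a1 ha1).symm
    · exact hne_ab a1 ha1 b1 hb1
    · exact (hne_wa z2 hz2.1 a1 ha1).symm
    · exact ha12
    · exact (hne_wa z3 hz3.1 a1 ha1).symm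
    · exact hne_ab a1 ha1 b2 hb2
    · exact (hne_wa z4 hz4.1 a1 ha1).symm
    · exact hne_wb z1 hz1.1 b1 hb1
    · exact h12
    · exact hne_wa z1 hz1.1 a2 ha2
    · exact h13
    · exact hne_wb z1 hz1.1 b2 hb2
    · exact h14
    · exact (hne_wb z2 hz2.1 b1 hb1).symm
    · exact (hne_ab a2 ha2 b1 hb1).symm
    · exact (hne_wb z3 hz3.1 b1 hb1).symm
    · exact hb12
    · exact (hne_wb z4 hz4.1 b1 hb1).symm
    · exact hne_wa z2 hz2.1 a2 ha2
    · exact h23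
    · exact hne_wb z2 hz2.1 b2 hb2
    · exact h24
    · exact (hne_wa z3 hz3.1 a2 ha2).symm
    · exact hne_ab a2 ha2 b2 hb2
    · exact (hne_wa z4 hz4.1 a2 ha2).symm
    · exact hne_wb z3 hz3.1 b2 hb2
    · exact h34
    · exact (hne_wb z4 hz4.1 b2 hb2).symm
    · exact (cswap c a1 z1).trans (hblueA z1 hz1.1 a1 ha1)
    · exact bb z1 hz1.1 hz1.2 b1 hb1
    · exact (cswap c b1 z2).trans (bb z2 hz2.1 hz2.2 b1 hb1)
    · exact hblueA z2 hz2.1 a2 ha2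
    · exact (cswap c a2 z3).trans (hblueA z3 hz3.1 a2 ha2)
    · exact bb z3 hz3.1 hz3.2 b2 hb2
    · exact (cswap c b2 z4).trans (bb z4 hz4.1 hz4.2 b2 hb2)
    · exact hblueA z4 hz4.1 a1 ha1
  · -- at least two vertices red to B
    set Y := W.filter (fun y => c s(y, b1) = red) with hYdef
    have hYZ : Y.card + Z.card = W.card := by
      rw [hYdef, hZdef]
      exact Finset.card_filter_add_card_filter_not _
    have hY2 : 2 ≤ Y.card := by omega
    have hYW : ∀ y ∈ Y, y ∈ W := fun y hy => (Finset.mem_filter.mp hy).1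
    have hYr : ∀ y ∈ Y, c s(y,b1) = red := fun y hy => (Finset.mem_filter.mp hy).2
    -- a red path with both endpoints red to B gives a red C8
    have redcycle : ∀ u1 ∈ Y, ∀ u2 ∈ Y, ∀ w ∈ W, u1 ≠ u2 → w ≠ u1 → w ≠ u2 →
        c s(u1,w) = red → c s(w,u2) = red → ∃ j : Fin k, hasMonoCycle c 8 j := by
      intro u1 hu1 u2 hu2 w hw h12 hw1 hw2 hc1 hc2
      have hu1W := hYW u1 hu1; have hu2W := hYW u2 hu2
      refine ⟨red, cycle8 c red b1 a1 b2 a2 b3 u1 w u2 ?_ ?_ ?_ ?_ ?_ ?_ ?_ ?_ ?_ ?_ ?_ ?_ ?_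
        ?_ ?_ ?_ ?_ ?_ ?_ ?_ ?_ ?_ ?_ ?_ ?_ ?_ ?_ ?_ ?_ ?_ ?_ ?_ ?_ ?_ ?_ ?_⟩
      · exact (hne_ab a1 ha1 b1 hb1).symm
      · exact hb12
      · exact (hne_ab a2 ha2 b1 hb1).symm
      · exact hb13
      · exact (hne_wb u1 hu1W b1 hb1).symm
      · exact (hne_wb w hw b1 hb1).symm
      · exact (hne_wb u2 hu2W b1 hb1).symm
      · exact hne_ab a1 ha1 b2 hb2
      · exact ha12
      · exact hne_ab a1 ha1 b3 hb3
      · exact (hne_wa u1 hu1W a1 ha1).symm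
      · exact (hne_wa w hw a1 ha1).symm
      · exact (hne_wa u2 hu2W a1 ha1).symm
      · exact (hne_ab a2 ha2 b2 hb2).symm
      · exact hb23
      · exact (hne_wb u1 hu1W b2 hb2).symm
      · exact (hne_wb w hw b2 hb2).symm
      · exact (hne_wb u2 hu2W b2 hb2).symm
      · exact hne_ab a2 ha2 b3 hb3
      · exact (hne_wa u1 hu1W a2 ha2).symm
      · exact (hne_wa w hw a2 ha2).symm
      · exact (hne_wa u2 hu2W a2 ha2).symm
      · exact (hne_wb u1 hu1W b3 hb3).symm
      · exact (hne_wb w hw b3 hb3).symm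
      · exact (hne_wb u2 hu2W b3 hb3).symm
      · exact Ne.symm hw1
      · exact h12
      · exact hw2
      · exact (cswap c b1 a1).trans (hAB a1 ha1 b1 hb1)
      · exact hAB a1 ha1 b2 hb2
      · exact (cswap c b2 a2).trans (hAB a2 ha2 b2 hb2)
      · exact hAB a2 ha2 b3 hb3
      · exact (cswap c b3 u1).trans (redB u1 hu1W (hYr u1 hu1) b3 hb3)
      · exact hc1
      · exact hc2
      · exact redB u2 hu2W (hYr u2 hu2) b1 hb1
    by_cases hsame : ∃ u1 ∈ Y, ∃ u2 ∈ Y, u1 ≠ u2 ∧ pt u1 = pt u2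
    · obtain ⟨u1, hu1, u2, hu2, hu12, hptu⟩ := hsame
      have hu1W := hYW u1 hu1; have hu2W := hYW u2 hu2
      have h1 : 1 ≤ (W \ pt u1).card := by
        have hh1 := Finset.le_card_sdiff (pt u1) W
        have hh2 := hcard3 u1
        omega
      obtain ⟨w, hw⟩ := Finset.card_pos.mp (show 0 < (W \ pt u1).card by omega)
      rw [Finset.mem_sdiff] at hw
      have hwW := hw.1
      have hwnp : pt w ≠ pt u1 := fun h => hw.2 (h ▸ hmem w)
      have hwu1 : w ≠ u1 := fun h => hw.2 (h ▸ hmem u1)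
      have hwu2 : w ≠ u2 := fun h => hw.2 (hptu ▸ (h ▸ hmem u2))
      have hcc : c s(u2,w) = c s(u1,w) :=
        hconst u2 w u1 w hptu.symm rfl (by rw [← hptu]; exact fun h => hwnp h.symm)
      have hred : c s(u1,w) = red := by
        rcases hdich u1 w (fun h => hwnp h.symm) with h | h
        · exact h
        · exfalso
          exact NB u1 hu1W w hwW u2 hu2W (Ne.symm hwu1) hwu2 hu12 h
            ((cswap c w u2).trans (hcc.trans h))
      exact redcycle u1 hu1 u2 hu2 w hwW hu12 hwu1 hwu2 hred
        ((cswap c w u2).trans (hcc.trans hred))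
    · push_neg at hsame
      obtain ⟨y1, hy1, y2, hy2, hy12⟩ := exdist2 _ hY2
      have hy1W := hYW y1 hy1; have hy2W := hYW y2 hy2
      have hsing : ∀ y ∈ Y, ∀ v, v ∈ pt y → v = y := by
        intro y hy v hv
        by_contra hne
        have hvW : v ∈ W := hWcl y (hYW y hy) v hv
        have hptv : pt v = pt y := hpt2 v y hv
        have hvY : v ∈ Y := by
          rw [hYdef, Finset.mem_filter]
          refine ⟨hvW, ?_⟩
          have := hconst v b1 y b1 hptv rfl (by rw [hptv, hptB b1 hb1]; exact hptWB y (hYW y hy))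
          rw [this]
          exact hYr y hy
        exact hsame v hvY y hy hne hptv
      by_cases hgood : ∃ w ∈ W, w ≠ y1 ∧ w ≠ y2 ∧ c s(y1,w) = red ∧ c s(w,y2) = red
      · obtain ⟨w, hwW, hw1, hw2, hc1, hc2⟩ := hgood
        exact redcycle y1 hy1 y2 hy2 w hwW hy12 hw1 hw2 hc1 hc2
      · push_neg at hgood
        exfalso
        have hblue12 : ∀ w ∈ W, w ≠ y1 → w ≠ y2 → c s(w,y1) = blue ∨ c s(w,y2) = blue := by
          intro w hwW h1 h2
          have hp1 : pt w ≠ pt y1 := fun h => h1 (hsing y1 hy1 w (h ▸ hmem w))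
          have hp2 : pt w ≠ pt y2 := fun h => h2 (hsing y2 hy2 w (h ▸ hmem w))
          rcases hdich w y1 hp1 with hr1 | hb1'
          · rcases hdich w y2 hp2 with hr2 | hb2'
            · exact absurd hr2 (hgood w hwW h1 h2 ((cswap c y1 w).trans hr1))
            · exact Or.inr hb2'
          · exact Or.inl hb1'
        have h3 : 3 ≤ (W \ {y1,y2}).card := by
          have h4 : ({y1,y2} : Finset (Fin n)).card ≤ 2 := Finset.card_insert_le _ _ |>.trans (by simp)
          have := Finset.le_card_sdiff ({y1,y2} : Finset (Fin n)) W
          omega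
        obtain ⟨w1, hw1, w2, hw2, w3, hw3, h12, h13, h23⟩ := exdist3 _ h3
        rw [Finset.mem_sdiff] at hw1 hw2 hw3
        simp only [Finset.mem_insert, Finset.mem_singleton, not_or] at hw1 hw2 hw3
        have pair : ∀ y ∈ Y, ∀ u v : Fin n, u ∈ W → v ∈ W → u ≠ v → u ≠ y → v ≠ y →
            c s(u,y) = blue → c s(v,y) = blue → False := by
          intro y hy u v hu hv huv hu1 hv1 hcu hcv
          exact NB u hu y (hYW y hy) v hv hu1 (Ne.symm hv1) huv hcu
            ((cswap c y v).trans hcv)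
        rcases hblue12 w1 hw1.1 hw1.2.1 hw1.2.2 with c1 | c1 <;>
          rcases hblue12 w2 hw2.1 hw2.2.1 hw2.2.2 with c2 | c2 <;>
            rcases hblue12 w3 hw3.1 hw3.2.1 hw3.2.2 with c3 | c3
        · exact pair y1 hy1 w1 w2 hw1.1 hw2.1 h12 hw1.2.1 hw2.2.1 c1 c2
        · exact pair y1 hy1 w1 w2 hw1.1 hw2.1 h12 hw1.2.1 hw2.2.1 c1 c2
        · exact pair y1 hy1 w1 w3 hw1.1 hw3.1 h13 hw1.2.1 hw3.2.1 c1 c3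
        · exact pair y2 hy2 w2 w3 hw2.1 hw3.1 h23 hw2.2.2 hw3.2.2 c2 c3
        · exact pair y1 hy1 w2 w3 hw2.1 hw3.1 h23 hw2.2.1 hw3.2.1 c2 c3
        · exact pair y2 hy2 w1 w3 hw1.1 hw3.1 h13 hw1.2.2 hw3.2.2 c1 c3
        · exact pair y2 hy2 w1 w2 hw1.1 hw2.1 h12 hw1.2.2 hw2.2.2 c1 c2
        · exact pair y2 hy2 w1 w2 hw1.1 hw2.1 h12 hw1.2.2 hw2.2.2 c1 c2

/-- If `n ≥ 11`, `c` is a Gallai coloring of `K_n` with a Gallai partition all of whose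
parts have order at most 3, and the partition has two parts of order 3, then `c` contains
a monochromatic `C₈`. -/
theorem mono_C8_of_two_parts_order_three (n k : ℕ) (hn : 11 ≤ n)
    (c : Sym2 (Fin n) → Fin k) (hrb : ¬ hasRainbowTriangle c)
    (P : Finpartition (Finset.univ : Finset (Fin n))) (hP : IsGallaiPartition c P)
    (hsmall : ∀ A ∈ P.parts, A.card ≤ 3)
    (A B : Finset (Fin n)) (hA : A ∈ P.parts) (hB : B ∈ P.parts) (hAB : A ≠ B)
    (hA3 : A.card = 3) (hB3 : B.card = 3) :
    ∃ j : Fin k, hasMonoCycle c 8 j := by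
  classical
  obtain ⟨-, c1, c2, hc⟩ := hP
  -- part machinery
  set pt : Fin n → Finset (Fin n) := fun v => P.part v with hptdef
  have hmem : ∀ v, v ∈ pt v := fun v => P.mem_part (Finset.mem_univ v)
  have hptmem : ∀ v, pt v ∈ P.parts := fun v => P.part_mem.2 (Finset.mem_univ v)
  have hpteq : ∀ v (Q : Finset (Fin n)), Q ∈ P.parts → v ∈ Q → pt v = Q :=
    fun v Q hQ hvQ => P.part_eq_of_mem hQ hvQ
  have hpt2 : ∀ u v, u ∈ pt v → pt u = pt v := fun u v h => hpteq u (pt v) (hptmem v) h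
  have hcard3 : ∀ v, (pt v).card ≤ 3 := fun v => hsmall _ (hptmem v)
  have hconst : ∀ u v u' v', pt u = pt u' → pt v = pt v' → pt u ≠ pt v →
      c s(u,v) = c s(u',v') := by
    intro u v u' v' h1 h2 hne
    rcases hc (pt u) (hptmem u) (pt v) (hptmem v) hne with h | h
    · rw [h u (hmem u) v (hmem v), h u' (h1 ▸ hmem u') v' (h2 ▸ hmem v')]
    · rw [h u (hmem u) v (hmem v), h u' (h1 ▸ hmem u') v' (h2 ▸ hmem v')]
  have hdich0 : ∀ u v, pt u ≠ pt v → c s(u,v) = c1 ∨ c s(u,v) = c2 := by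
    intro u v hne
    rcases hc (pt u) (hptmem u) (pt v) (hptmem v) hne with h | h
    · exact Or.inl (h u (hmem u) v (hmem v))
    · exact Or.inr (h u (hmem u) v (hmem v))
  have hptA : ∀ a ∈ A, pt a = A := fun a ha => hpteq a A hA ha
  have hptB : ∀ b ∈ B, pt b = B := fun b hb => hpteq b B hB hb
  have hdisj : Disjoint A B := P.disjoint hA hB hAB
  have hABd : ∀ a ∈ A, a ∉ B := fun a ha hb => Finset.disjoint_left.mp hdisj ha hb
  have hBAd : ∀ b ∈ B, b ∉ A := fun b hb ha => Finset.disjoint_left.mp hdisj ha hb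
  set W : Finset (Fin n) := (A ∪ B)ᶜ with hWdef
  have hWd : ∀ w ∈ W, w ∉ A ∧ w ∉ B := by
    intro w hw
    rw [hWdef, Finset.mem_compl, Finset.mem_union] at hw
    tauto
  have hWmem : ∀ v : Fin n, v ∉ A → v ∉ B → v ∈ W := by
    intro v h1 h2
    rw [hWdef, Finset.mem_compl, Finset.mem_union]
    tauto
  have hW5 : 5 ≤ W.card := by
    have h1 : (A ∪ B).card = 6 := by
      rw [Finset.card_union_of_disjoint hdisj, hA3, hB3]
    have h2 : W.card = n - 6 := by
      rw [hWdef, Finset.card_compl, h1, Fintype.card_fin]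
    omega
  have hWcl : ∀ w ∈ W, ∀ w' ∈ pt w, w' ∈ W := by
    intro w hw w' hw'
    have h1 := hpt2 w' w hw'
    refine hWmem w' (fun hA' => ?_) (fun hB' => ?_)
    · refine (hWd w hw).1 ?_
      have h2 := hpteq w' A hA hA'
      rw [h1] at h2
      exact h2 ▸ hmem w
    · refine (hWd w hw).2 ?_
      have h2 := hpteq w' B hB hB'
      rw [h1] at h2
      exact h2 ▸ hmem w
  have hptWA : ∀ w ∈ W, pt w ≠ A := fun w hw h => (hWd w hw).1 (h ▸ hmem w)
  have hptWB : ∀ w ∈ W, pt w ≠ B := fun w hw h => (hWd w hw).2 (h ▸ hmem w)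
  obtain ⟨a1, ha1, a2, ha2, a3, ha3, ha12, ha13, ha23⟩ := exdist3 A (by omega)
  obtain ⟨b1, hb1, b2, hb2, b3, hb3, hb12, hb13, hb23⟩ := exdist3 B (by omega)
  have hne_ab : ∀ a ∈ A, ∀ b ∈ B, a ≠ b := fun a ha b hb h => hABd a ha (h ▸ hb)
  have hne_wa : ∀ w ∈ W, ∀ a ∈ A, w ≠ a := fun w hw a ha h => (hWd w hw).1 (h ▸ ha)
  have hne_wb : ∀ w ∈ W, ∀ b ∈ B, w ≠ b := fun w hw b hb h => (hWd w hw).2 (h ▸ hb)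
  have hptAB : (A : Finset (Fin n)) ≠ B := hAB
  -- main argument, for either naming of the two colors
  have key : ∀ red blue : Fin k,
      (∀ u v, pt u ≠ pt v → c s(u,v) = red ∨ c s(u,v) = blue) →
      (∀ a ∈ A, ∀ b ∈ B, c s(a,b) = red) → ∃ j : Fin k, hasMonoCycle c 8 j := by
    intro red blue hdich hABred
    -- colors from a W vertex to all of A / all of B
    have redA : ∀ w ∈ W, c s(w,a1) = red → ∀ a ∈ A, c s(w,a) = red := by
      intro w hw hwr a ha
      have := hconst w a w a1 rfl (by rw [hptA a ha, hptA a1 ha1]) (by rw [hptA a ha]; exact hptWA w hw)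
      rw [this, hwr]
    have blueA : ∀ w ∈ W, c s(w,a1) ≠ red → ∀ a ∈ A, c s(w,a) = blue := by
      intro w hw hwr a ha
      have h1 : c s(w,a1) = blue := by
        rcases hdich w a1 (by rw [hptA a1 ha1]; exact hptWA w hw) with h | h
        · exact absurd h hwr
        · exact h
      have := hconst w a w a1 rfl (by rw [hptA a ha, hptA a1 ha1]) (by rw [hptA a ha]; exact hptWA w hw)
      rw [this, h1]
    have redB : ∀ w ∈ W, c s(w,b1) = red → ∀ b ∈ B, c s(w,b) = red := by
      intro w hw hwr b hb
      have := hconst w b w b1 rfl (by rw [hptB b hb, hptB b1 hb1]) (by rw [hptB b hb]; exact hptWB w hw)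
      rw [this, hwr]
    have blueB : ∀ w ∈ W, c s(w,b1) ≠ red → ∀ b ∈ B, c s(w,b) = blue := by
      intro w hw hwr b hb
      have h1 : c s(w,b1) = blue := by
        rcases hdich w b1 (by rw [hptB b1 hb1]; exact hptWB w hw) with h | h
        · exact absurd h hwr
        · exact h
      have := hconst w b w b1 rfl (by rw [hptB b hb, hptB b1 hb1]) (by rw [hptB b hb]; exact hptWB w hw)
      rw [this, h1]
    by_cases hx : ∃ x ∈ W, ∃ y ∈ W, x ≠ y ∧ c s(x,a1) = red ∧ c s(y,b1) = red
    · -- red C8 : a1 x a2 b1 a3 b2 y b3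
      obtain ⟨x, hxW, y, hyW, hxy, hxr, hyr⟩ := hx
      refine ⟨red, cycle8 c red a1 x a2 b1 a3 b2 y b3 ?_ ?_ ?_ ?_ ?_ ?_ ?_ ?_ ?_ ?_ ?_ ?_ ?_
        ?_ ?_ ?_ ?_ ?_ ?_ ?_ ?_ ?_ ?_ ?_ ?_ ?_ ?_ ?_ ?_ ?_ ?_ ?_ ?_ ?_ ?_ ?_⟩
      · exact (hne_wa x hxW a1 ha1).symm
      · exact ha12
      · exact hne_ab a1 ha1 b1 hb1
      · exact ha13
      · exact hne_ab a1 ha1 b2 hb2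
      · exact (hne_wa y hyW a1 ha1).symm
      · exact hne_ab a1 ha1 b3 hb3
      · exact hne_wa x hxW a2 ha2
      · exact hne_wb x hxW b1 hb1
      · exact hne_wa x hxW a3 ha3
      · exact hne_wb x hxW b2 hb2
      · exact hxy
      · exact hne_wb x hxW b3 hb3
      · exact (hne_ab a2 ha2 b1 hb1)
      · exact ha23
      · exact hne_ab a2 ha2 b2 hb2
      · exact (hne_wa y hyW a2 ha2).symm
      · exact hne_ab a2 ha2 b3 hb3
      · exact (hne_ab a3 ha3 b1 hb1).symm
      · exact hb12
      · exact (hne_wb y hyW b1 hb1).symm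
      · exact hb13
      · exact hne_ab a3 ha3 b2 hb2
      · exact (hne_wa y hyW a3 ha3).symm
      · exact hne_ab a3 ha3 b3 hb3
      · exact (hne_wb y hyW b2 hb2).symm
      · exact hb23
      · exact hne_wb y hyW b3 hb3
      · exact (cswap c a1 x).trans (redA x hxW hxr a1 ha1)
      · exact redA x hxW hxr a2 ha2
      · exact hABred a2 ha2 b1 hb1
      · exact (cswap c b1 a3).trans (hABred a3 ha3 b1 hb1)
      · exact hABred a3 ha3 b2 hb2
      · exact (cswap c b2 y).trans (redB y hyW hyr b2 hb2)
      · exact redB y hyW hyr b3 hb3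
      · exact (cswap c b3 a1).trans (hABred a1 ha1 b3 hb3)
    · push_neg at hx
      by_cases hrb2 : red = blue
      · -- impossible : all cross edges are red then
        exfalso
        obtain ⟨x, hxW, y, hyW, hxy⟩ := exdist2 W (by omega)
        have hxr : c s(x,a1) = red := by
          rcases hdich x a1 (by rw [hptA a1 ha1]; exact hptWA x hxW) with h | h
          · exact h
          · rw [h, hrb2]
        have hyr : c s(y,b1) = red := by
          rcases hdich y b1 (by rw [hptB b1 hb1]; exact hptWB y hyW) with h | h
          · exact h
          · rw [h, hrb2]
        exact hx x hxW y hyW hxy hxr hyr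
      · by_cases h2 : ∃ x ∈ W, c s(x,a1) = red
        · obtain ⟨x0, hx0W, hx0r⟩ := h2
          by_cases h3 : c s(x0,b1) = red
          · -- everything else is blue to both A and B : blue K_{6,4}
            have hAb : ∀ y ∈ W, y ≠ x0 → ∀ a ∈ A, c s(y,a) = blue := by
              intro y hy hne a ha
              refine blueA y hy (fun hr => ?_) a ha
              exact hx y hy x0 hx0W hne hr h3
            have hBb : ∀ y ∈ W, y ≠ x0 → ∀ b ∈ B, c s(y,b) = blue := by
              intro y hy hne b hb
              refine blueB y hy (hx x0 hx0W y hy (Ne.symm hne) hx0r) b hb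
            have h4 : 4 ≤ (W.erase x0).card := by
              rw [Finset.card_erase_of_mem hx0W]; omega
            obtain ⟨z1, hz1, z2, hz2, z3, hz3, z4, hz4, h12, h13, h14, h23, h24, h34⟩ :=
              exdist4 _ h4
            have hz1W := Finset.mem_of_mem_erase hz1
            have hz2W := Finset.mem_of_mem_erase hz2
            have hz3W := Finset.mem_of_mem_erase hz3
            have hz4W := Finset.mem_of_mem_erase hz4
            have hz1x := Finset.ne_of_mem_erase hz1
            have hz2x := Finset.ne_of_mem_erase hz2
            have hz3x := Finset.ne_of_mem_erase hz3
            have hz4x := Finset.ne_of_mem_erase hz4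
            refine ⟨blue, cycle8 c blue a1 z1 b1 z2 a2 z3 b2 z4 ?_ ?_ ?_ ?_ ?_ ?_ ?_ ?_ ?_ ?_
              ?_ ?_ ?_ ?_ ?_ ?_ ?_ ?_ ?_ ?_ ?_ ?_ ?_ ?_ ?_ ?_ ?_ ?_ ?_ ?_ ?_ ?_ ?_ ?_ ?_ ?_⟩
            · exact (hne_wa z1 hz1W a1 ha1).symm
            · exact hne_ab a1 ha1 b1 hb1
            · exact (hne_wa z2 hz2W a1 ha1).symm
            · exact ha12
            · exact (hne_wa z3 hz3W a1 ha1).symm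
            · exact hne_ab a1 ha1 b2 hb2
            · exact (hne_wa z4 hz4W a1 ha1).symm
            · exact hne_wb z1 hz1W b1 hb1
            · exact h12
            · exact hne_wa z1 hz1W a2 ha2
            · exact h13
            · exact hne_wb z1 hz1W b2 hb2
            · exact h14
            · exact (hne_wb z2 hz2W b1 hb1).symm
            · exact (hne_ab a2 ha2 b1 hb1).symm
            · exact (hne_wb z3 hz3W b1 hb1).symm
            · exact hb12
            · exact (hne_wb z4 hz4W b1 hb1).symm
            · exact hne_wa z2 hz2W a2 ha2
            · exact h23
            · exact hne_wb z2 hz2W b2 hb2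
            · exact h24
            · exact (hne_wa z3 hz3W a2 ha2).symm
            · exact hne_ab a2 ha2 b2 hb2
            · exact (hne_wa z4 hz4W a2 ha2).symm
            · exact hne_wb z3 hz3W b2 hb2
            · exact h34
            · exact (hne_wb z4 hz4W b2 hb2).symm
            · exact (cswap c a1 z1).trans (hAb z1 hz1W hz1x a1 ha1)
            · exact hBb z1 hz1W hz1x b1 hb1
            · exact (cswap c b1 z2).trans (hBb z2 hz2W hz2x b1 hb1)
            · exact hAb z2 hz2W hz2x a2 ha2
            · exact (cswap c a2 z3).trans (hAb z3 hz3W hz3x a2 ha2)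
            · exact hBb z3 hz3W hz3x b2 hb2
            · exact (cswap c b2 z4).trans (hBb z4 hz4W hz4x b2 hb2)
            · exact hAb z4 hz4W hz4x a1 ha1
          · -- every W vertex is blue to B : apply L1 with B and A swapped
            have hblueB : ∀ w ∈ W, ∀ b ∈ B, c s(w,b) = blue := by
              intro w hw b hb
              by_cases hwx : w = x0
              · exact blueB w hw (by rw [hwx]; exact h3) b hb
              · exact blueB w hw (hx x0 hx0W w hw (Ne.symm hwx) hx0r) b hb
            exact L1 c red blue hrb2 pt hmem hpt2 hcard3 hconst hdich B A W hB3 hA3 hW5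
              hptB hptA hBAd (fun w hw => ⟨(hWd w hw).2, (hWd w hw).1⟩) hWcl
              (fun b hb a ha => (cswap c b a).trans (hABred a ha b hb)) hblueB
        · -- every W vertex is blue to A : apply L1 directly
          push_neg at h2
          have hblueA : ∀ w ∈ W, ∀ a ∈ A, c s(w,a) = blue := fun w hw a ha =>
            blueA w hw (h2 w hw) a ha
          exact L1 c red blue hrb2 pt hmem hpt2 hcard3 hconst hdich A B W hA3 hB3 hW5
            hptA hptB hABd hWd hWcl hABred hblueA
  rcases hc A hA B hB hAB with h | h
  · exact key c1 c2 hdich0 h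
  · exact key c2 c1 (fun u v hne => (hdich0 u v hne).symm) h
end

section
/- Let G be an edge-coloring of K_n with no rainbow triangle, equipped with a Gallai partition in which every part has order at most 3. If the Gallai partition has a part of order at least 3 and there are at least nine vertices outside this part, then G contains a monochromatic copy of C_8. -/
open Finset

section Infra
variable {V : Type*}

lemma exists_mem_notmem {α : Type*} [DecidableEq α] (s t : Finset α) (h : t.card < s.card) :
    ∃ a ∈ s, a ∉ t := by
  by_contra hc
  push_neg at hc
  exact absurd (Finset.card_le_card hc) (by omega)

lemma sortBlocks {m F : ℕ} (g : Fin m → V) (key : V → ℕ)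
    (hfib : ∀ i : Fin m,
      ((univ : Finset (Fin m)).filter (fun j => key (g j) = key (g i))).card ≤ F) :
    ∃ σ : Equiv.Perm (Fin m), ∀ i j : Fin m, i ≤ j →
      key (g (σ i)) = key (g (σ j)) → (j : ℕ) < (i : ℕ) + F := by
  classical
  refine ⟨Tuple.sort (fun i => key (g i)), ?_⟩
  intro i j hij hkey
  by_contra hcon
  push_neg at hcon
  set σ := Tuple.sort (fun i => key (g i)) with hσ
  have hmono : Monotone ((fun i => key (g i)) ∘ σ) := Tuple.monotone_sort _
  have hsame : ∀ l ∈ Finset.Icc i j, key (g (σ l)) = key (g (σ i)) := by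
    intro l hl
    rw [Finset.mem_Icc] at hl
    have h1 := hmono hl.1
    have h2 := hmono hl.2
    simp only [Function.comp_apply] at h1 h2
    omega
  have hsub : (Finset.Icc i j).image (fun l => σ l) ⊆
      (univ : Finset (Fin m)).filter (fun l => key (g l) = key (g (σ i))) := by
    intro x hx
    simp only [Finset.mem_image] at hx
    obtain ⟨l, hl, rfl⟩ := hx
    simp only [Finset.mem_filter, Finset.mem_univ, true_and]
    exact hsame l hl
  have hcard1 : (Finset.Icc i j).card = (j : ℕ) + 1 - (i : ℕ) := Fin.card_Icc i j
  have hcard2 : ((Finset.Icc i j).image (fun l => σ l)).card = (Finset.Icc i j).card :=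
    Finset.card_image_of_injective _ σ.injective
  have := Finset.card_le_card hsub
  have hF := hfib (σ i)
  omega

/-- fiber bound: if `g` enumerates distinct vertices whose parts have at most 3 elements,
then each key-fiber among the indices has at most 3 elements. -/
lemma fib3 {m n : ℕ} (g : Fin m → Fin n) (hg : Function.Injective g)
    (pt : Fin n → Finset (Fin n)) (key : Fin n → ℕ)
    (hkey : ∀ u v, key u = key v → pt u = pt v)
    (hmem : ∀ v, v ∈ pt v) (hcard : ∀ v, (pt v).card ≤ 3) :
    ∀ i : Fin m, ((univ : Finset (Fin m)).filter (fun j => key (g j) = key (g i))).card ≤ 3 := by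
  classical
  intro i
  set Fl := (univ : Finset (Fin m)).filter (fun j => key (g j) = key (g i)) with hFl
  have himg : (Fl.image g) ⊆ pt (g i) := by
    intro x hx
    simp only [Finset.mem_image] at hx
    obtain ⟨l, hl, rfl⟩ := hx
    rw [hFl, Finset.mem_filter] at hl
    have := hkey _ _ hl.2
    rw [← this]
    exact hmem _
  have h1 : (Fl.image g).card = Fl.card := Finset.card_image_of_injective _ hg
  have := (Finset.card_le_card himg).trans (hcard (g i))
  omega

lemma inj5 {α : Type*} {v0 v1 v2 v3 v4 : α}
    (h01 : v0 ≠ v1) (h02 : v0 ≠ v2) (h03 : v0 ≠ v3) (h04 : v0 ≠ v4)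
    (h12 : v1 ≠ v2) (h13 : v1 ≠ v3) (h14 : v1 ≠ v4)
    (h23 : v2 ≠ v3) (h24 : v2 ≠ v4) (h34 : v3 ≠ v4) :
    Function.Injective ![v0,v1,v2,v3,v4] := by
  intro i j h
  fin_cases i <;> fin_cases j <;>
    first
      | rfl
      | exact absurd h (by assumption)
      | exact absurd h.symm (by assumption)

lemma inj7 {α : Type*} {v0 v1 v2 v3 v4 v5 v6 : α}
    (h01 : v0 ≠ v1) (h02 : v0 ≠ v2) (h03 : v0 ≠ v3) (h04 : v0 ≠ v4) (h05 : v0 ≠ v5)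
    (h06 : v0 ≠ v6)
    (h12 : v1 ≠ v2) (h13 : v1 ≠ v3) (h14 : v1 ≠ v4) (h15 : v1 ≠ v5) (h16 : v1 ≠ v6)
    (h23 : v2 ≠ v3) (h24 : v2 ≠ v4) (h25 : v2 ≠ v5) (h26 : v2 ≠ v6)
    (h34 : v3 ≠ v4) (h35 : v3 ≠ v5) (h36 : v3 ≠ v6)
    (h45 : v4 ≠ v5) (h46 : v4 ≠ v6) (h56 : v5 ≠ v6) :
    Function.Injective ![v0,v1,v2,v3,v4,v5,v6] := by
  intro i j h
  fin_cases i <;> fin_cases j <;>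
    first
      | rfl
      | exact absurd h (by assumption)
      | exact absurd h.symm (by assumption)

lemma inj8 {α : Type*} {v0 v1 v2 v3 v4 v5 v6 v7 : α}
    (h01 : v0 ≠ v1) (h02 : v0 ≠ v2) (h03 : v0 ≠ v3) (h04 : v0 ≠ v4) (h05 : v0 ≠ v5)
    (h06 : v0 ≠ v6) (h07 : v0 ≠ v7)
    (h12 : v1 ≠ v2) (h13 : v1 ≠ v3) (h14 : v1 ≠ v4) (h15 : v1 ≠ v5) (h16 : v1 ≠ v6)
    (h17 : v1 ≠ v7)
    (h23 : v2 ≠ v3) (h24 : v2 ≠ v4) (h25 : v2 ≠ v5) (h26 : v2 ≠ v6) (h27 : v2 ≠ v7)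
    (h34 : v3 ≠ v4) (h35 : v3 ≠ v5) (h36 : v3 ≠ v6) (h37 : v3 ≠ v7)
    (h45 : v4 ≠ v5) (h46 : v4 ≠ v6) (h47 : v4 ≠ v7)
    (h56 : v5 ≠ v6) (h57 : v5 ≠ v7)
    (h67 : v6 ≠ v7) :
    Function.Injective ![v0,v1,v2,v3,v4,v5,v6,v7] := by
  intro i j h
  fin_cases i <;> fin_cases j <;>
    first
      | rfl
      | exact absurd h (by assumption)
      | exact absurd h.symm (by assumption)

/-- Eight distinct vertices with all key-fibers of size at most 3 can be arranged in a
cyclic order in which consecutive vertices have distinct keys. -/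
lemma arrange8 (g : Fin 8 → V) (hg : Function.Injective g) (key : V → ℕ)
    (hfib : ∀ i : Fin 8,
      ((univ : Finset (Fin 8)).filter (fun j => key (g j) = key (g i))).card ≤ 3) :
    ∃ u : Fin 8 → V, Function.Injective u ∧ (∀ p, ∃ i, u p = g i) ∧
      ∀ p : Fin 8, key (u p) ≠ key (u ⟨(p.val + 1) % 8, by omega⟩) := by
  obtain ⟨σ, hσ⟩ := sortBlocks g key hfib
  set f : Fin 8 → V := fun i => g (σ i) with hf
  have hfinj : Function.Injective f := hg.comp σ.injective
  have hne : ∀ a b : Fin 8, a ≠ b → f a ≠ f b := fun a b hab => fun h => hab (hfinj h)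
  refine ⟨![f 0, f 4, f 1, f 5, f 2, f 6, f 3, f 7], ?_, ?_, ?_⟩
  · exact inj8 (hne 0 4 (by decide)) (hne 0 1 (by decide)) (hne 0 5 (by decide))
      (hne 0 2 (by decide)) (hne 0 6 (by decide)) (hne 0 3 (by decide)) (hne 0 7 (by decide))
      (hne 4 1 (by decide)) (hne 4 5 (by decide)) (hne 4 2 (by decide)) (hne 4 6 (by decide))
      (hne 4 3 (by decide)) (hne 4 7 (by decide))
      (hne 1 5 (by decide)) (hne 1 2 (by decide)) (hne 1 6 (by decide)) (hne 1 3 (by decide))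
      (hne 1 7 (by decide))
      (hne 5 2 (by decide)) (hne 5 6 (by decide)) (hne 5 3 (by decide)) (hne 5 7 (by decide))
      (hne 2 6 (by decide)) (hne 2 3 (by decide)) (hne 2 7 (by decide))
      (hne 6 3 (by decide)) (hne 6 7 (by decide))
      (hne 3 7 (by decide))
  · intro p
    fin_cases p <;> exact ⟨_, rfl⟩
  · intro p
    fin_cases p <;>
      first
        | exact fun h => absurd (hσ _ _ (by decide) h) (by decide)
        | exact fun h => absurd (hσ _ _ (by decide) h.symm) (by decide)

end Infra

section Infra3
variable {V : Type*}

lemma choose3 (x y z b1 b5 : V) (hxy : x ≠ y) (hxz : x ≠ z) (hyz : y ≠ z) :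
    ∃ s mm t : V, s ≠ b1 ∧ t ≠ b5 ∧ s ≠ mm ∧ s ≠ t ∧ mm ≠ t ∧
      (s = x ∨ s = y ∨ s = z) ∧ (mm = x ∨ mm = y ∨ mm = z) ∧ (t = x ∨ t = y ∨ t = z) := by
  by_cases h1 : x = b1
  · by_cases h5 : z = b5
    · exact ⟨z, x, y, fun h => hxz (h1.trans h.symm), fun h => hyz (h.trans h5.symm),
        hxz.symm, hyz.symm, hxy, by tauto, by tauto, by tauto⟩
    · exact ⟨y, x, z, fun h => hxy (h1.trans h.symm), h5,
        hxy.symm, hyz, hxz, by tauto, by tauto, by tauto⟩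
  · by_cases h5 : z = b5
    · exact ⟨x, z, y, h1, fun h => hyz (h.trans h5.symm),
        hxz, hxy, hyz.symm, by tauto, by tauto, by tauto⟩
    · exact ⟨x, y, z, h1, h5, hxy, hxz, hyz, by tauto, by tauto, by tauto⟩

lemma rot {m : ℕ} [NeZero m] [DecidableEq V] (w : Fin m → V) (hw : Function.Injective w)
    (d : Fin m) (b1 b5 : V) (hm : 2 < m) :
    ∃ r : Fin m, w r ≠ b1 ∧ w (r + d) ≠ b5 := by
  classical
  set filt := (univ : Finset (Fin m)).filter (fun r => w r = b1 ∨ w (r + d) = b5) with hfilt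
  have hsub : filt ⊆ (univ.filter (fun r => w r = b1)) ∪ (univ.filter (fun r => w (r + d) = b5)) := by
    intro a ha
    rw [hfilt, mem_filter] at ha
    rcases ha.2 with h | h
    · exact mem_union_left _ (mem_filter.mpr ⟨mem_univ _, h⟩)
    · exact mem_union_right _ (mem_filter.mpr ⟨mem_univ _, h⟩)
  have hc1 : (univ.filter (fun r : Fin m => w r = b1)).card ≤ 1 := by
    apply Finset.card_le_one.mpr
    intro a ha b hb
    rw [mem_filter] at ha hb
    exact hw (ha.2.trans hb.2.symm)
  have hc2 : (univ.filter (fun r : Fin m => w (r + d) = b5)).card ≤ 1 := by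
    apply Finset.card_le_one.mpr
    intro a ha b hb
    rw [mem_filter] at ha hb
    have := hw (ha.2.trans hb.2.symm)
    exact add_right_cancel this
  have hcard : filt.card < (univ : Finset (Fin m)).card := by
    have := (Finset.card_le_card hsub).trans (Finset.card_union_le _ _)
    have hu : (univ : Finset (Fin m)).card = m := by simp
    omega
  obtain ⟨r, _, hr⟩ := exists_mem_notmem univ filt hcard
  refine ⟨r, ?_, ?_⟩ <;>
    · intro h
      exact hr (by rw [hfilt, mem_filter]; exact ⟨mem_univ _, by tauto⟩)

lemma path7 (g : Fin 7 → V) (hg : Function.Injective g) (key : V → ℕ)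
    (hfib : ∀ i : Fin 7,
      ((univ : Finset (Fin 7)).filter (fun j => key (g j) = key (g i))).card ≤ 3) (bad : V) :
    ∃ u : Fin 7 → V, Function.Injective u ∧ (∀ p, ∃ i, u p = g i) ∧
      (∀ p : Fin 7, key (u p) ≠ key (u (p + 1))) ∧ u 0 ≠ bad ∧ u 6 ≠ bad := by
  classical
  obtain ⟨σ, hσ⟩ := sortBlocks g key hfib
  set f : Fin 7 → V := fun i => g (σ i) with hf
  have hfinj : Function.Injective f := hg.comp σ.injective
  have hne : ∀ a b : Fin 7, a ≠ b → f a ≠ f b := fun a b hab h => hab (hfinj h)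
  set w : Fin 7 → V := ![f 0, f 4, f 1, f 5, f 2, f 6, f 3] with hwdef
  have hwinj : Function.Injective w :=
    inj7 (hne 0 4 (by decide)) (hne 0 1 (by decide)) (hne 0 5 (by decide))
      (hne 0 2 (by decide)) (hne 0 6 (by decide)) (hne 0 3 (by decide))
      (hne 4 1 (by decide)) (hne 4 5 (by decide)) (hne 4 2 (by decide)) (hne 4 6 (by decide))
      (hne 4 3 (by decide))
      (hne 1 5 (by decide)) (hne 1 2 (by decide)) (hne 1 6 (by decide)) (hne 1 3 (by decide))
      (hne 5 2 (by decide)) (hne 5 6 (by decide)) (hne 5 3 (by decide))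
      (hne 2 6 (by decide)) (hne 2 3 (by decide))
      (hne 6 3 (by decide))
  have hwrange : ∀ q : Fin 7, ∃ i, w q = g i := by
    intro q; fin_cases q <;> exact ⟨_, rfl⟩
  have hcyc : ∀ p : Fin 7, key (w p) ≠ key (w (p + 1)) := by
    intro p
    fin_cases p <;>
      first
        | exact fun h => absurd (hσ _ _ (by decide) h) (by decide)
        | exact fun h => absurd (hσ _ _ (by decide) h.symm) (by decide)
  obtain ⟨r, hr1, hr5⟩ := rot w hwinj 6 bad bad (by norm_num)
  refine ⟨fun q => w (r + q), ?_, fun p => hwrange _, ?_, ?_, ?_⟩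
  · intro q1 q2 h
    exact add_left_cancel (hwinj h)
  · intro p
    have := hcyc (r + p)
    rwa [add_assoc] at this
  · simpa using hr1
  · exact hr5

lemma path5 [DecidableEq V] (g : Fin 5 → V) (hg : Function.Injective g) (key : V → ℕ)
    (hfib : ∀ i : Fin 5,
      ((univ : Finset (Fin 5)).filter (fun j => key (g j) = key (g i))).card ≤ 3) (b1 b5 : V) :
    ∃ u : Fin 5 → V, Function.Injective u ∧ (∀ p, ∃ i, u p = g i) ∧
      (key (u 0) ≠ key (u 1) ∧ key (u 1) ≠ key (u 2) ∧ key (u 2) ≠ key (u 3) ∧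
        key (u 3) ≠ key (u 4)) ∧ u 0 ≠ b1 ∧ u 4 ≠ b5 := by
  classical
  by_cases hbig : ∃ i : Fin 5, 3 ≤ ((univ : Finset (Fin 5)).filter
      (fun j => key (g j) = key (g i))).card
  · obtain ⟨i0, hi0⟩ := hbig
    set F := (univ : Finset (Fin 5)).filter (fun j => key (g j) = key (g i0)) with hFdef
    have hF3 : F.card = 3 := le_antisymm (hfib i0) hi0
    obtain ⟨i1, i2, i3, h12, h13, h23, hFeq⟩ := Finset.card_eq_three.mp hF3
    have hk1 : key (g i1) = key (g i0) := by
      have : i1 ∈ F := by rw [hFeq]; simp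
      rw [hFdef, mem_filter] at this; exact this.2
    have hk2 : key (g i2) = key (g i0) := by
      have : i2 ∈ F := by rw [hFeq]; simp
      rw [hFdef, mem_filter] at this; exact this.2
    have hk3 : key (g i3) = key (g i0) := by
      have : i3 ∈ F := by rw [hFeq]; simp
      rw [hFdef, mem_filter] at this; exact this.2
    have hCcard : ((univ : Finset (Fin 5)) \ F).card = 2 := by
      rw [Finset.card_sdiff_of_subset (Finset.subset_univ _), hF3]
      simp
    obtain ⟨j1, j2, hj12, hCeq⟩ := Finset.card_eq_two.mp hCcard
    have hj1 : key (g j1) ≠ key (g i0) := by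
      have : j1 ∈ (univ : Finset (Fin 5)) \ F := by rw [hCeq]; simp
      rw [Finset.mem_sdiff, hFdef, mem_filter] at this
      intro h; exact this.2 ⟨mem_univ _, h⟩
    have hj2 : key (g j2) ≠ key (g i0) := by
      have : j2 ∈ (univ : Finset (Fin 5)) \ F := by rw [hCeq]; simp
      rw [Finset.mem_sdiff, hFdef, mem_filter] at this
      intro h; exact this.2 ⟨mem_univ _, h⟩
    obtain ⟨s, mm, t, hs1, ht5, hsm, hst, hmt, hsx, hmx, htx⟩ :=
      choose3 (g i1) (g i2) (g i3) b1 b5 (hg.ne h12) (hg.ne h13) (hg.ne h23)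
    have ks : key s = key (g i0) := by rcases hsx with rfl | rfl | rfl <;> assumption
    have km : key mm = key (g i0) := by rcases hmx with rfl | rfl | rfl <;> assumption
    have kt : key t = key (g i0) := by rcases htx with rfl | rfl | rfl <;> assumption
    refine ⟨![s, g j1, mm, g j2, t], ?_, ?_, ⟨?_, ?_, ?_, ?_⟩, hs1, ht5⟩
    · refine inj5 ?_ hsm ?_ hst ?_ (hg.ne hj12) ?_ ?_ hmt ?_
      · exact fun h => hj1 (by rw [← h]; exact ks)
      · exact fun h => hj2 (by rw [← h]; exact ks)
      · exact fun h => hj1 (by rw [h]; exact km)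
      · exact fun h => hj1 (by rw [h]; exact kt)
      · exact fun h => hj2 (by rw [← h]; exact km)
      · exact fun h => hj2 (by rw [h]; exact kt)
    · intro p
      fin_cases p
      · rcases hsx with h | h | h <;> exact ⟨_, h⟩
      · exact ⟨j1, rfl⟩
      · rcases hmx with h | h | h <;> exact ⟨_, h⟩
      · exact ⟨j2, rfl⟩
      · rcases htx with h | h | h <;> exact ⟨_, h⟩
    · exact fun h => hj1 (h.symm.trans ks)
    · exact fun h => hj1 (h.trans km)
    · exact fun h => hj2 (h.symm.trans km)
    · exact fun h => hj2 (h.trans kt)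
  · push_neg at hbig
    have hfib2 : ∀ i : Fin 5, ((univ : Finset (Fin 5)).filter
        (fun j => key (g j) = key (g i))).card ≤ 2 := fun i => by have := hbig i; omega
    obtain ⟨σ, hσ⟩ := sortBlocks g key hfib2
    set f : Fin 5 → V := fun i => g (σ i) with hf
    have hfinj : Function.Injective f := hg.comp σ.injective
    have hne : ∀ a b : Fin 5, a ≠ b → f a ≠ f b := fun a b hab h => hab (hfinj h)
    set w : Fin 5 → V := ![f 0, f 3, f 1, f 4, f 2] with hwdef
    have hwinj : Function.Injective w :=
      inj5 (hne 0 3 (by decide)) (hne 0 1 (by decide)) (hne 0 4 (by decide))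
        (hne 0 2 (by decide)) (hne 3 1 (by decide)) (hne 3 4 (by decide))
        (hne 3 2 (by decide)) (hne 1 4 (by decide)) (hne 1 2 (by decide))
        (hne 4 2 (by decide))
    have hwrange : ∀ q : Fin 5, ∃ i, w q = g i := by
      intro q; fin_cases q <;> exact ⟨_, rfl⟩
    have hcyc : ∀ p : Fin 5, key (w p) ≠ key (w (p + 1)) := by
      intro p
      fin_cases p <;>
        first
          | exact fun h => absurd (hσ _ _ (by decide) h) (by decide)
          | exact fun h => absurd (hσ _ _ (by decide) h.symm) (by decide)
    obtain ⟨r, hr1, hr5⟩ := rot w hwinj 4 b1 b5 (by norm_num)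
    have hgen : ∀ p : Fin 5, key (w (r + p)) ≠ key (w (r + (p + 1))) := by
      intro p
      have := hcyc (r + p)
      rwa [add_assoc] at this
    refine ⟨fun q => w (r + q), ?_, fun p => hwrange _, ⟨hgen 0, hgen 1, hgen 2, hgen 3⟩,
      ?_, hr5⟩
    · intro q1 q2 h
      exact add_left_cancel (hwinj h)
    · simpa using hr1

end Infra3
section Main
variable {n k : ℕ}
lemma blueEndgame (c : Sym2 (Fin n) → Fin k) (r b : Fin k)
    (A : Finset (Fin n)) (a1 a2 a3 : Fin n)
    (ha1 : a1 ∈ A) (ha2 : a2 ∈ A) (ha3 : a3 ∈ A)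
    (h12 : a1 ≠ a2) (h13 : a1 ≠ a3) (h23 : a2 ≠ a3)
    (pt : Fin n → Finset (Fin n)) (key : Fin n → ℕ)
    (hptmem : ∀ v, v ∈ pt v) (hptcard : ∀ v, (pt v).card ≤ 3)
    (hkeypt : ∀ u v, key u = key v → pt u = pt v)
    (hptkey : ∀ u v, pt u = pt v → key u = key v)
    (hcross : ∀ u v : Fin n, pt u ≠ pt v → c s(u,v) = r ∨ c s(u,v) = b)
    (X Y : Finset (Fin n))
    (hXA : ∀ w ∈ X, w ∉ A) (hYA : ∀ w ∈ Y, w ∉ A)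
    (hXYd : ∀ u ∈ X, u ∉ Y)
    (hXYpt : ∀ u ∈ X, ∀ w ∈ Y, pt u ≠ pt w)
    (hXr : ∀ w ∈ X, ∀ a ∈ A, c s(a,w) = r)
    (hYb : ∀ w ∈ Y, ∀ a ∈ A, c s(a,w) = b)
    (hsum : 9 ≤ X.card + Y.card) (hX5 : 5 ≤ X.card)
    (X' : Finset (Fin n)) (hX'sub : X' ⊆ X)
    (hX'blue : ∀ u ∈ X', ∀ v ∈ X', pt u ≠ pt v → c s(u,v) = b)
    (hX'big : X.card ≤ X'.card + 1) :
    ∃ j : Fin k, hasMonoCycle c 8 j := by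
  classical
  have hswap : ∀ u v : Fin n, c s(u,v) = c s(v,u) := fun u v => by rw [Sym2.eq_swap]
  have neAX : ∀ {a u : Fin n}, a ∈ A → u ∈ X → a ≠ u :=
    fun {a u} ha hu h => hXA u hu (h ▸ ha)
  have neAY : ∀ {a u : Fin n}, a ∈ A → u ∈ Y → a ≠ u :=
    fun {a u} ha hu h => hYA u hu (h ▸ ha)
  have neXY : ∀ {u w : Fin n}, u ∈ X → w ∈ Y → u ≠ w :=
    fun {u w} hu hw h => hXYd u hu (h ▸ hw)
  by_cases h8 : 8 ≤ X'.card
  · -- blue C8 inside X'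
    obtain ⟨S, hSsub, hS8⟩ := Finset.exists_subset_card_eq h8
    set g : Fin 8 → Fin n := fun i => ((S.orderIsoOfFin hS8) i : Fin n) with hgdef
    have hginj : Function.Injective g :=
      fun i j h => (S.orderIsoOfFin hS8).injective (Subtype.ext h)
    have hgmem : ∀ i, g i ∈ X' := fun i => hSsub ((S.orderIsoOfFin hS8) i).2
    obtain ⟨u, uinj, urange, ukey⟩ :=
      arrange8 g hginj key (fib3 g hginj pt key hkeypt hptmem hptcard)
    have umem : ∀ p, u p ∈ X' := fun p => by
      obtain ⟨i, hi⟩ := urange p; rw [hi]; exact hgmem i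
    exact ⟨b, u, uinj, fun i =>
      hX'blue _ (umem i) _ (umem _) fun hpt => ukey i (hptkey _ _ hpt)⟩
  · push_neg at h8
    by_cases hrich : ∃ w ∈ Y, ∃ x1 ∈ X, ∃ x2 ∈ X, x1 ≠ x2 ∧ c s(w,x1) ≠ b ∧ c s(w,x2) ≠ b
    · -- red C8 : a1 u3 a2 u4 a3 x1 w x2
      obtain ⟨w, hw, x1, hx1, x2, hx2, hx12, hnb1, hnb2⟩ := hrich
      have hr1 : c s(w,x1) = r := (hcross w x1 (hXYpt x1 hx1 w hw).symm).resolve_right hnb1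
      have hr2 : c s(w,x2) = r := (hcross w x2 (hXYpt x2 hx2 w hw).symm).resolve_right hnb2
      obtain ⟨u3, hu3X, hu3n⟩ := exists_mem_notmem X {x1, x2}
        (lt_of_le_of_lt (Finset.card_insert_le _ _ |>.trans
          (Nat.succ_le_succ (Finset.card_singleton _).le)) (by omega))
      simp only [mem_insert, mem_singleton, not_or] at hu3n
      obtain ⟨hu3x1, hu3x2⟩ := hu3n
      obtain ⟨u4, hu4X, hu4n⟩ := exists_mem_notmem X {x1, x2, u3}
        (lt_of_le_of_lt (Finset.card_insert_le _ _ |>.trans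
          (Nat.succ_le_succ (Finset.card_insert_le _ _ |>.trans
            (Nat.succ_le_succ (Finset.card_singleton _).le)))) (by omega))
      simp only [mem_insert, mem_singleton, not_or] at hu4n
      obtain ⟨hu4x1, hu4x2, hu4u3⟩ := hu4n
      refine ⟨r, ![a1, u3, a2, u4, a3, x1, w, x2], ?_, ?_⟩
      · exact inj8 (neAX ha1 hu3X) h12 (neAX ha1 hu4X) h13 (neAX ha1 hx1) (neAY ha1 hw)
          (neAX ha1 hx2)
          (neAX ha2 hu3X).symm (Ne.symm hu4u3) (neAX ha3 hu3X).symm hu3x1 (neXY hu3X hw) hu3x2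
          (neAX ha2 hu4X) h23 (neAX ha2 hx1) (neAY ha2 hw) (neAX ha2 hx2)
          (neAX ha3 hu4X).symm hu4x1 (neXY hu4X hw) hu4x2
          (neAX ha3 hx1) (neAY ha3 hw) (neAX ha3 hx2)
          (neXY hx1 hw) hx12
          (neXY hx2 hw).symm
      · intro i
        fin_cases i
        · exact hXr u3 hu3X a1 ha1
        · exact (hswap u3 a2).trans (hXr u3 hu3X a2 ha2)
        · exact hXr u4 hu4X a2 ha2
        · exact (hswap u4 a3).trans (hXr u4 hu4X a3 ha3)
        · exact hXr x1 hx1 a3 ha3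
        · exact (hswap x1 w).trans hr1
        · exact hr2
        · exact (hswap x2 a1).trans (hXr x2 hx2 a1 ha1)
    · -- each w in Y is blue to all of X except at most one vertex
      have hb1 : ∀ w ∈ Y, ∃ uw : Fin n, ∀ x ∈ X, x ≠ uw → c s(w,x) = b := by
        intro w hw
        by_cases hex : ∃ x ∈ X, c s(w,x) ≠ b
        · obtain ⟨e, heX, henb⟩ := hex
          refine ⟨e, fun x hx hxe => ?_⟩
          by_contra hxb
          exact hrich ⟨w, hw, x, hx, e, heX, hxe, hxb, henb⟩
        · push_neg at hex
          exact ⟨w, fun x hx _ => hex x hx⟩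
      by_cases hy4 : 4 ≤ Y.card
      · -- blue C8 : a1 w2 x3 w4 a2 w6 x7 w8
        obtain ⟨w2, hw2⟩ := Finset.card_pos.mp (show 0 < Y.card by omega)
        obtain ⟨w4, hw4, hw4n⟩ := exists_mem_notmem Y {w2}
          (lt_of_le_of_lt (Finset.card_singleton _).le (by omega))
        simp only [mem_singleton] at hw4n
        obtain ⟨w6, hw6, hw6n⟩ := exists_mem_notmem Y {w2, w4}
          (lt_of_le_of_lt (Finset.card_insert_le _ _ |>.trans
            (Nat.succ_le_succ (Finset.card_singleton _).le)) (by omega))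
        simp only [mem_insert, mem_singleton, not_or] at hw6n
        obtain ⟨hw62, hw64⟩ := hw6n
        obtain ⟨w8, hw8, hw8n⟩ := exists_mem_notmem Y {w2, w4, w6}
          (lt_of_le_of_lt (Finset.card_insert_le _ _ |>.trans
            (Nat.succ_le_succ (Finset.card_insert_le _ _ |>.trans
              (Nat.succ_le_succ (Finset.card_singleton _).le)))) (by omega))
        simp only [mem_insert, mem_singleton, not_or] at hw8n
        obtain ⟨hw82, hw84, hw86⟩ := hw8n
        obtain ⟨uw2, hbw2⟩ := hb1 w2 hw2
        obtain ⟨uw4, hbw4⟩ := hb1 w4 hw4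
        obtain ⟨uw6, hbw6⟩ := hb1 w6 hw6
        obtain ⟨uw8, hbw8⟩ := hb1 w8 hw8
        obtain ⟨x3, hx3X, hx3n⟩ := exists_mem_notmem X {uw2, uw4}
          (lt_of_le_of_lt (Finset.card_insert_le _ _ |>.trans
            (Nat.succ_le_succ (Finset.card_singleton _).le)) (by omega))
        simp only [mem_insert, mem_singleton, not_or] at hx3n
        obtain ⟨hx3u2, hx3u4⟩ := hx3n
        obtain ⟨x7, hx7X, hx7n⟩ := exists_mem_notmem X {uw6, uw8, x3}
          (lt_of_le_of_lt (Finset.card_insert_le _ _ |>.trans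
            (Nat.succ_le_succ (Finset.card_insert_le _ _ |>.trans
              (Nat.succ_le_succ (Finset.card_singleton _).le)))) (by omega))
        simp only [mem_insert, mem_singleton, not_or] at hx7n
        obtain ⟨hx7u6, hx7u8, hx7x3⟩ := hx7n
        refine ⟨b, ![a1, w2, x3, w4, a2, w6, x7, w8], ?_, ?_⟩
        · exact inj8 (neAY ha1 hw2) (neAX ha1 hx3X) (neAY ha1 hw4) h12 (neAY ha1 hw6)
            (neAX ha1 hx7X) (neAY ha1 hw8)
            (neXY hx3X hw2).symm (Ne.symm hw4n) (neAY ha2 hw2).symm (Ne.symm hw62)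
            (neXY hx7X hw2).symm (Ne.symm hw82)
            (neXY hx3X hw4) (neAX ha2 hx3X).symm (neXY hx3X hw6) (Ne.symm hx7x3) (neXY hx3X hw8)
            (neAY ha2 hw4).symm (Ne.symm hw64) (neXY hx7X hw4).symm (Ne.symm hw84)
            (neAY ha2 hw6) (neAX ha2 hx7X) (neAY ha2 hw8)
            (neXY hx7X hw6).symm (Ne.symm hw86)
            (neXY hx7X hw8)
        · intro i
          fin_cases i
          · exact hYb w2 hw2 a1 ha1
          · exact hbw2 x3 hx3X hx3u2
          · exact (hswap x3 w4).trans (hbw4 x3 hx3X hx3u4)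
          · exact (hswap w4 a2).trans (hYb w4 hw4 a2 ha2)
          · exact hYb w6 hw6 a2 ha2
          · exact hbw6 x7 hx7X hx7u6
          · exact (hswap x7 w8).trans (hbw8 x7 hx7X hx7u8)
          · exact (hswap w8 a1).trans (hYb w8 hw8 a1 ha1)
      · push_neg at hy4
        have hX6 : 6 ≤ X.card := by omega
        have hX'5 : 5 ≤ X'.card := by omega
        by_cases hy2 : 2 ≤ Y.card
        · -- blue C8 : a1 w2 u0 u1 u2 u3 u4 w8
          obtain ⟨w2, hw2⟩ := Finset.card_pos.mp (show 0 < Y.card by omega)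
          obtain ⟨w8, hw8, hw8n⟩ := exists_mem_notmem Y {w2}
            (lt_of_le_of_lt (Finset.card_singleton _).le (by omega))
          simp only [mem_singleton] at hw8n
          obtain ⟨uw2, hbw2⟩ := hb1 w2 hw2
          obtain ⟨uw8, hbw8⟩ := hb1 w8 hw8
          obtain ⟨S, hSsub, hS5⟩ := Finset.exists_subset_card_eq hX'5
          set g : Fin 5 → Fin n := fun i => ((S.orderIsoOfFin hS5) i : Fin n) with hgdef
          have hginj : Function.Injective g :=
            fun i j h => (S.orderIsoOfFin hS5).injective (Subtype.ext h)
          have hgmem : ∀ i, g i ∈ X' := fun i => hSsub ((S.orderIsoOfFin hS5) i).2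
          obtain ⟨u, uinj, urange, ⟨k01, k12, k23, k34⟩, hu0, hu4⟩ :=
            path5 g hginj key (fib3 g hginj pt key hkeypt hptmem hptcard) uw2 uw8
          have umem : ∀ p, u p ∈ X' := fun p => by
            obtain ⟨i, hi⟩ := urange p; rw [hi]; exact hgmem i
          have umemX : ∀ p, u p ∈ X := fun p => hX'sub (umem p)
          refine ⟨b, ![a1, w2, u 0, u 1, u 2, u 3, u 4, w8], ?_, ?_⟩
          · exact inj8 (neAY ha1 hw2) (neAX ha1 (umemX 0)) (neAX ha1 (umemX 1))
              (neAX ha1 (umemX 2)) (neAX ha1 (umemX 3)) (neAX ha1 (umemX 4)) (neAY ha1 hw8)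
              (neXY (umemX 0) hw2).symm (neXY (umemX 1) hw2).symm (neXY (umemX 2) hw2).symm
              (neXY (umemX 3) hw2).symm (neXY (umemX 4) hw2).symm (Ne.symm hw8n)
              (uinj.ne (by decide)) (uinj.ne (by decide)) (uinj.ne (by decide))
              (uinj.ne (by decide)) (neXY (umemX 0) hw8)
              (uinj.ne (by decide)) (uinj.ne (by decide)) (uinj.ne (by decide))
              (neXY (umemX 1) hw8)
              (uinj.ne (by decide)) (uinj.ne (by decide)) (neXY (umemX 2) hw8)
              (uinj.ne (by decide)) (neXY (umemX 3) hw8)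
              (neXY (umemX 4) hw8)
          · intro i
            fin_cases i
            · exact hYb w2 hw2 a1 ha1
            · exact hbw2 (u 0) (umemX 0) hu0
            · exact hX'blue _ (umem 0) _ (umem 1) fun h => k01 (hptkey _ _ h)
            · exact hX'blue _ (umem 1) _ (umem 2) fun h => k12 (hptkey _ _ h)
            · exact hX'blue _ (umem 2) _ (umem 3) fun h => k23 (hptkey _ _ h)
            · exact hX'blue _ (umem 3) _ (umem 4) fun h => k34 (hptkey _ _ h)
            · exact (hswap (u 4) w8).trans (hbw8 (u 4) (umemX 4) hu4)
            · exact (hswap w8 a1).trans (hYb w8 hw8 a1 ha1)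
        · -- Y.card = 1, X'.card = 7 : blue C8 : w u0 u1 u2 u3 u4 u5 u6
          push_neg at hy2
          obtain ⟨w, hw⟩ := Finset.card_pos.mp (show 0 < Y.card by omega)
          obtain ⟨uw, hbw⟩ := hb1 w hw
          have h7 : X'.card = 7 := by omega
          set g : Fin 7 → Fin n := fun i => ((X'.orderIsoOfFin h7) i : Fin n) with hgdef
          have hginj : Function.Injective g :=
            fun i j h => (X'.orderIsoOfFin h7).injective (Subtype.ext h)
          have hgmem : ∀ i, g i ∈ X' := fun i => ((X'.orderIsoOfFin h7) i).2
          obtain ⟨u, uinj, urange, ukey, hu0, hu6⟩ :=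
            path7 g hginj key (fib3 g hginj pt key hkeypt hptmem hptcard) uw
          have umem : ∀ p, u p ∈ X' := fun p => by
            obtain ⟨i, hi⟩ := urange p; rw [hi]; exact hgmem i
          have umemX : ∀ p, u p ∈ X := fun p => hX'sub (umem p)
          refine ⟨b, ![w, u 0, u 1, u 2, u 3, u 4, u 5, u 6], ?_, ?_⟩
          · exact inj8 (neXY (umemX 0) hw).symm (neXY (umemX 1) hw).symm
              (neXY (umemX 2) hw).symm (neXY (umemX 3) hw).symm (neXY (umemX 4) hw).symm
              (neXY (umemX 5) hw).symm (neXY (umemX 6) hw).symm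
              (uinj.ne (by decide)) (uinj.ne (by decide)) (uinj.ne (by decide)) (uinj.ne (by decide)) (uinj.ne (by decide)) (uinj.ne (by decide)) (uinj.ne (by decide)) (uinj.ne (by decide)) (uinj.ne (by decide)) (uinj.ne (by decide)) (uinj.ne (by decide)) (uinj.ne (by decide)) (uinj.ne (by decide)) (uinj.ne (by decide)) (uinj.ne (by decide)) (uinj.ne (by decide)) (uinj.ne (by decide)) (uinj.ne (by decide)) (uinj.ne (by decide)) (uinj.ne (by decide)) (uinj.ne (by decide))
          · intro i
            fin_cases i
            · exact hbw (u 0) (umemX 0) hu0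
            · exact hX'blue _ (umem 0) _ (umem 1) fun h => ukey 0 (hptkey _ _ h)
            · exact hX'blue _ (umem 1) _ (umem 2) fun h => ukey 1 (hptkey _ _ h)
            · exact hX'blue _ (umem 2) _ (umem 3) fun h => ukey 2 (hptkey _ _ h)
            · exact hX'blue _ (umem 3) _ (umem 4) fun h => ukey 3 (hptkey _ _ h)
            · exact hX'blue _ (umem 4) _ (umem 5) fun h => ukey 4 (hptkey _ _ h)
            · exact hX'blue _ (umem 5) _ (umem 6) fun h => ukey 5 (hptkey _ _ h)
            · exact (hswap (u 6) w).trans (hbw (u 6) (umemX 6) hu6)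
lemma mainaux (c : Sym2 (Fin n) → Fin k) (r b : Fin k)
    (A : Finset (Fin n)) (a1 a2 a3 : Fin n)
    (ha1 : a1 ∈ A) (ha2 : a2 ∈ A) (ha3 : a3 ∈ A)
    (h12 : a1 ≠ a2) (h13 : a1 ≠ a3) (h23 : a2 ≠ a3)
    (pt : Fin n → Finset (Fin n)) (key : Fin n → ℕ)
    (hptmem : ∀ v, v ∈ pt v) (hptcard : ∀ v, (pt v).card ≤ 3)
    (hkeypt : ∀ u v, key u = key v → pt u = pt v)
    (hptkey : ∀ u v, pt u = pt v → key u = key v)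
    (hcross : ∀ u v : Fin n, pt u ≠ pt v → c s(u,v) = r ∨ c s(u,v) = b)
    (X Y : Finset (Fin n))
    (hXA : ∀ w ∈ X, w ∉ A) (hYA : ∀ w ∈ Y, w ∉ A)
    (hXYd : ∀ u ∈ X, u ∉ Y)
    (hXYpt : ∀ u ∈ X, ∀ w ∈ Y, pt u ≠ pt w)
    (hXr : ∀ w ∈ X, ∀ a ∈ A, c s(a,w) = r)
    (hYb : ∀ w ∈ Y, ∀ a ∈ A, c s(a,w) = b)
    (hsum : 9 ≤ X.card + Y.card) (hX5 : 5 ≤ X.card) :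
    ∃ j : Fin k, hasMonoCycle c 8 j := by
  classical
  have hswap : ∀ u v : Fin n, c s(u,v) = c s(v,u) := fun u v => by rw [Sym2.eq_swap]
  have neAX : ∀ {a u : Fin n}, a ∈ A → u ∈ X → a ≠ u :=
    fun {a u} ha hu h => hXA u hu (h ▸ ha)
  have neAY : ∀ {a u : Fin n}, a ∈ A → u ∈ Y → a ≠ u :=
    fun {a u} ha hu h => hYA u hu (h ▸ ha)
  have neXY : ∀ {u w : Fin n}, u ∈ X → w ∈ Y → u ≠ w :=
    fun {u w} hu hw h => hXYd u hu (h ▸ hw)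
  have ptne : ∀ {u v : Fin n}, pt u ≠ pt v → u ≠ v := fun {u v} h he => h (he ▸ rfl)
  -- Step 1 : find X' ⊆ X with at most one vertex removed, all cross pairs blue,
  --          or else produce a red C8.
  by_cases h1 : ∀ u ∈ X, ∀ v ∈ X, pt u ≠ pt v → c s(u,v) = b
  case neg =>
    push_neg at h1
    obtain ⟨u0, hu0, v0, hv0, hpt0, hnb0⟩ := h1
    have hred0 : c s(u0,v0) = r := (hcross u0 v0 hpt0).resolve_right hnb0
    have hne0 : u0 ≠ v0 := ptne hpt0
    by_cases h2 : ∀ u ∈ X.erase v0, ∀ v ∈ X.erase v0, pt u ≠ pt v → c s(u,v) = b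
    case neg =>
      -- a second red pair avoiding v0 : red C8
      push_neg at h2
      obtain ⟨u1, hu1e, w1, hw1e, hpt1, hnb1⟩ := h2
      have hu1X : u1 ∈ X := mem_of_mem_erase hu1e
      have hw1X : w1 ∈ X := mem_of_mem_erase hw1e
      have hu1v0 : u1 ≠ v0 := ne_of_mem_erase hu1e
      have hw1v0 : w1 ≠ v0 := ne_of_mem_erase hw1e
      have hred1 : c s(u1,w1) = r := (hcross u1 w1 hpt1).resolve_right hnb1
      have hne1 : u1 ≠ w1 := ptne hpt1
      by_cases hc1 : u0 = u1
      · -- red path v0 - u0 - w1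
        subst hc1
        obtain ⟨z4, hz4X, hz4n⟩ := exists_mem_notmem X {v0, u0, w1}
          (lt_of_le_of_lt (Finset.card_insert_le _ _ |>.trans
            (Nat.succ_le_succ (Finset.card_insert_le _ _ |>.trans
              (Nat.succ_le_succ (Finset.card_singleton _).le)))) (by omega))
        simp only [mem_insert, mem_singleton, not_or] at hz4n
        obtain ⟨hz4v0, hz4u0, hz4w1⟩ := hz4n
        obtain ⟨z5, hz5X, hz5n⟩ := exists_mem_notmem X {v0, u0, w1, z4}
          (lt_of_le_of_lt (Finset.card_insert_le _ _ |>.trans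
            (Nat.succ_le_succ (Finset.card_insert_le _ _ |>.trans
              (Nat.succ_le_succ (Finset.card_insert_le _ _ |>.trans
                (Nat.succ_le_succ (Finset.card_singleton _).le)))))) (by omega))
        simp only [mem_insert, mem_singleton, not_or] at hz5n
        obtain ⟨hz5v0, hz5u0, hz5w1, hz5z4⟩ := hz5n
        -- cycle : v0 u0 w1 a1 z4 a2 z5 a3
        refine ⟨r, ![v0, u0, w1, a1, z4, a2, z5, a3], ?_, ?_⟩
        · exact inj8 hne0.symm hw1v0.symm (neAX ha1 hv0).symm (Ne.symm hz4v0) (neAX ha2 hv0).symm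
            (Ne.symm hz5v0) (neAX ha3 hv0).symm
            hne1 (neAX ha1 hu0).symm (Ne.symm hz4u0) (neAX ha2 hu0).symm (Ne.symm hz5u0)
            (neAX ha3 hu0).symm
            (neAX ha1 hw1X).symm (Ne.symm hz4w1) (neAX ha2 hw1X).symm (Ne.symm hz5w1)
            (neAX ha3 hw1X).symm
            (neAX ha1 hz4X) h12 (neAX ha1 hz5X) h13
            (neAX ha2 hz4X).symm (Ne.symm hz5z4) (neAX ha3 hz4X).symm
            (neAX ha2 hz5X) h23
            (neAX ha3 hz5X).symm
        · intro i
          fin_cases i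
          · exact (hswap v0 u0).trans hred0
          · exact hred1
          · exact (hswap w1 a1).trans (hXr w1 hw1X a1 ha1)
          · exact hXr z4 hz4X a1 ha1
          · exact (hswap z4 a2).trans (hXr z4 hz4X a2 ha2)
          · exact hXr z5 hz5X a2 ha2
          · exact (hswap z5 a3).trans (hXr z5 hz5X a3 ha3)
          · exact hXr v0 hv0 a3 ha3
      · by_cases hc2 : u0 = w1
        · -- red path v0 - u0 - u1
          subst hc2
          obtain ⟨z4, hz4X, hz4n⟩ := exists_mem_notmem X {v0, u0, u1}
            (lt_of_le_of_lt (Finset.card_insert_le _ _ |>.trans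
              (Nat.succ_le_succ (Finset.card_insert_le _ _ |>.trans
                (Nat.succ_le_succ (Finset.card_singleton _).le)))) (by omega))
          simp only [mem_insert, mem_singleton, not_or] at hz4n
          obtain ⟨hz4v0, hz4u0, hz4u1⟩ := hz4n
          obtain ⟨z5, hz5X, hz5n⟩ := exists_mem_notmem X {v0, u0, u1, z4}
            (lt_of_le_of_lt (Finset.card_insert_le _ _ |>.trans
              (Nat.succ_le_succ (Finset.card_insert_le _ _ |>.trans
                (Nat.succ_le_succ (Finset.card_insert_le _ _ |>.trans
                  (Nat.succ_le_succ (Finset.card_singleton _).le)))))) (by omega))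
          simp only [mem_insert, mem_singleton, not_or] at hz5n
          obtain ⟨hz5v0, hz5u0, hz5u1, hz5z4⟩ := hz5n
          -- cycle : v0 u0 u1 a1 z4 a2 z5 a3
          refine ⟨r, ![v0, u0, u1, a1, z4, a2, z5, a3], ?_, ?_⟩
          · exact inj8 hne0.symm hu1v0.symm (neAX ha1 hv0).symm (Ne.symm hz4v0) (neAX ha2 hv0).symm
              (Ne.symm hz5v0) (neAX ha3 hv0).symm
              hne1.symm (neAX ha1 hu0).symm (Ne.symm hz4u0) (neAX ha2 hu0).symm (Ne.symm hz5u0)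
              (neAX ha3 hu0).symm
              (neAX ha1 hu1X).symm (Ne.symm hz4u1) (neAX ha2 hu1X).symm (Ne.symm hz5u1)
              (neAX ha3 hu1X).symm
              (neAX ha1 hz4X) h12 (neAX ha1 hz5X) h13
              (neAX ha2 hz4X).symm (Ne.symm hz5z4) (neAX ha3 hz4X).symm
              (neAX ha2 hz5X) h23
              (neAX ha3 hz5X).symm
          · intro i
            fin_cases i
            · exact (hswap v0 u0).trans hred0
            · exact (hswap u0 u1).trans hred1
            · exact (hswap u1 a1).trans (hXr u1 hu1X a1 ha1)
            · exact hXr z4 hz4X a1 ha1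
            · exact (hswap z4 a2).trans (hXr z4 hz4X a2 ha2)
            · exact hXr z5 hz5X a2 ha2
            · exact (hswap z5 a3).trans (hXr z5 hz5X a3 ha3)
            · exact hXr v0 hv0 a3 ha3
        · -- two disjoint red pairs (u0,v0) and (u1,w1)
          have hu0u1 : u0 ≠ u1 := hc1
          have hu0w1 : u0 ≠ w1 := hc2
          obtain ⟨z5, hz5X, hz5n⟩ := exists_mem_notmem X {u0, v0, u1, w1}
            (lt_of_le_of_lt (Finset.card_insert_le _ _ |>.trans
              (Nat.succ_le_succ (Finset.card_insert_le _ _ |>.trans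
                (Nat.succ_le_succ (Finset.card_insert_le _ _ |>.trans
                  (Nat.succ_le_succ (Finset.card_singleton _).le)))))) (by omega))
          simp only [mem_insert, mem_singleton, not_or] at hz5n
          obtain ⟨hz5u0, hz5v0, hz5u1, hz5w1⟩ := hz5n
          -- cycle : u0 v0 a1 u1 w1 a2 z5 a3
          refine ⟨r, ![u0, v0, a1, u1, w1, a2, z5, a3], ?_, ?_⟩
          · exact inj8 hne0 (neAX ha1 hu0).symm hu0u1 hu0w1 (neAX ha2 hu0).symm (Ne.symm hz5u0)
              (neAX ha3 hu0).symm
              (neAX ha1 hv0).symm hu1v0.symm hw1v0.symm (neAX ha2 hv0).symm (Ne.symm hz5v0)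
              (neAX ha3 hv0).symm
              (neAX ha1 hu1X) (neAX ha1 hw1X) h12 (neAX ha1 hz5X) h13
              hne1 (neAX ha2 hu1X).symm (Ne.symm hz5u1) (neAX ha3 hu1X).symm
              (neAX ha2 hw1X).symm (Ne.symm hz5w1) (neAX ha3 hw1X).symm
              (neAX ha2 hz5X) h23
              (neAX ha3 hz5X).symm
          · intro i
            fin_cases i
            · exact hred0
            · exact (hswap v0 a1).trans (hXr v0 hv0 a1 ha1)
            · exact hXr u1 hu1X a1 ha1
            · exact hred1
            · exact (hswap w1 a2).trans (hXr w1 hw1X a2 ha2)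
            · exact hXr z5 hz5X a2 ha2
            · exact (hswap z5 a3).trans (hXr z5 hz5X a3 ha3)
            · exact hXr u0 hu0 a3 ha3
    case pos =>
      exact blueEndgame c r b A a1 a2 a3 ha1 ha2 ha3 h12 h13 h23 pt key hptmem hptcard
        hkeypt hptkey hcross X Y hXA hYA hXYd hXYpt hXr hYb hsum hX5
        (X.erase v0) (erase_subset _ _) h2
        (by rw [Finset.card_erase_of_mem hv0]; omega)
  case pos =>
    exact blueEndgame c r b A a1 a2 a3 ha1 ha2 ha3 h12 h13 h23 pt key hptmem hptcard
      hkeypt hptkey hcross X Y hXA hYA hXYd hXYpt hXr hYb hsum hX5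
      X Finset.Subset.rfl h1 (by omega)

end Main

/-- If `c` is a Gallai coloring of `K_n` with a Gallai partition all of whose parts have
order at most 3, with a part of order at least 3 and at least nine vertices outside this
part, then `c` contains a monochromatic `C₈`. -/
theorem mono_C8_of_part3_nine_more (n k : ℕ)
    (c : Sym2 (Fin n) → Fin k) (hrb : ¬ hasRainbowTriangle c)
    (P : Finpartition (Finset.univ : Finset (Fin n))) (hP : IsGallaiPartition c P)
    (hsmall : ∀ A ∈ P.parts, A.card ≤ 3)
    (A : Finset (Fin n)) (hA : A ∈ P.parts) (hA3 : 3 ≤ A.card)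
    (hextra : A.card + 9 ≤ n) :
    ∃ j : Fin k, hasMonoCycle c 8 j := by
  classical
  obtain ⟨hP2, c1, c2, hGal⟩ := hP
  choose pt hptparts hptmem using fun v : Fin n => P.exists_mem (mem_univ v)
  have hptuniq : ∀ B ∈ P.parts, ∀ v ∈ B, pt v = B := fun B hB v hv =>
    P.eq_of_mem_parts (hptparts v) hB (hptmem v) hv
  have hptcard : ∀ v, (pt v).card ≤ 3 := fun v => hsmall _ (hptparts v)
  set key : Fin n → ℕ := fun v => (pt v).sup (fun x : Fin n => (x : ℕ)) with hkeydef
  have hptkey : ∀ u v : Fin n, pt u = pt v → key u = key v := by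
    intro u v h
    simp only [hkeydef, h]
  have hkeypt : ∀ u v : Fin n, key u = key v → pt u = pt v := by
    intro u v h
    obtain ⟨m1, hm1, he1⟩ := Finset.exists_mem_eq_sup (pt u) ⟨u, hptmem u⟩
      (fun x : Fin n => (x : ℕ))
    obtain ⟨m2, hm2, he2⟩ := Finset.exists_mem_eq_sup (pt v) ⟨v, hptmem v⟩
      (fun x : Fin n => (x : ℕ))
    have hval : (m1 : ℕ) = (m2 : ℕ) := by
      rw [← he1, ← he2]
      exact h
    have hm : m1 = m2 := Fin.val_injective hval
    refine P.eq_of_mem_parts (hptparts u) (hptparts v) hm1 ?_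
    rw [hm]
    exact hm2
  have hApart : ∀ a ∈ A, pt a = A := fun a ha => hptuniq A hA a ha
  have hcross12 : ∀ u v : Fin n, pt u ≠ pt v → c s(u,v) = c1 ∨ c s(u,v) = c2 := by
    intro u v h
    rcases hGal (pt u) (hptparts u) (pt v) (hptparts v) h with h' | h'
    · exact Or.inl (h' u (hptmem u) v (hptmem v))
    · exact Or.inr (h' u (hptmem u) v (hptmem v))
  have hA3' : A.card = 3 := le_antisymm (hsmall A hA) hA3
  obtain ⟨a1, a2, a3, h12, h13, h23, hAeq⟩ := Finset.card_eq_three.mp hA3'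
  have ha1 : a1 ∈ A := by rw [hAeq]; simp
  have ha2 : a2 ∈ A := by rw [hAeq]; simp
  have ha3 : a3 ∈ A := by rw [hAeq]; simp
  have hAuniform : ∀ w, w ∉ A → ∀ a ∈ A, ∀ a' ∈ A, c s(a,w) = c s(a',w) := by
    intro w hwA a ha a' ha'
    have hne : A ≠ pt w := by
      intro h
      apply hwA
      rw [h]
      exact hptmem w
    rcases hGal A hA (pt w) (hptparts w) hne with h' | h' <;>
      exact (h' a ha w (hptmem w)).trans (h' a' ha' w (hptmem w)).symm
  have hsamept : ∀ u w : Fin n, u ∉ A → pt u = pt w → c s(a1,u) = c s(a1,w) := by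
    intro u w huA h
    have hne : A ≠ pt u := by
      intro he
      apply huA
      rw [he]
      exact hptmem u
    rcases hGal A hA (pt u) (hptparts u) hne with h' | h' <;>
      exact (h' a1 ha1 u (hptmem u)).trans (h' a1 ha1 w (by rw [h]; exact hptmem w)).symm
  set Wset := (univ : Finset (Fin n)) \ A with hWdef
  have hWcard : 9 ≤ Wset.card := by
    rw [hWdef, Finset.card_sdiff_of_subset (Finset.subset_univ A)]
    have : (univ : Finset (Fin n)).card = n := by simp
    omega
  set X := Wset.filter (fun w => c s(a1, w) = c1) with hXdef
  set Y := Wset \ X with hYdef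
  have hXW : X ⊆ Wset := Finset.filter_subset _ _
  have hYW : Y ⊆ Wset := Finset.sdiff_subset
  have hXA : ∀ w ∈ X, w ∉ A := fun w hw => (Finset.mem_sdiff.mp (hXW hw)).2
  have hYA : ∀ w ∈ Y, w ∉ A := fun w hw => (Finset.mem_sdiff.mp (hYW hw)).2
  have hXcol : ∀ w ∈ X, ∀ a ∈ A, c s(a,w) = c1 := fun w hw a ha =>
    (hAuniform w (hXA w hw) a ha a1 ha1).trans (Finset.mem_filter.mp hw).2
  have hYnc1 : ∀ w ∈ Y, c s(a1, w) ≠ c1 := by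
    intro w hw h
    have hw' := Finset.mem_sdiff.mp hw
    exact hw'.2 (Finset.mem_filter.mpr ⟨hw'.1, h⟩)
  have hYcol : ∀ w ∈ Y, ∀ a ∈ A, c s(a,w) = c2 := by
    intro w hw a ha
    have hwA := hYA w hw
    have hptwA : pt a1 ≠ pt w := by
      rw [hApart a1 ha1]
      intro h
      apply hwA
      rw [h]
      exact hptmem w
    have h2 := (hcross12 a1 w hptwA).resolve_left (hYnc1 w hw)
    exact (hAuniform w hwA a ha a1 ha1).trans h2
  have hXYd : ∀ u ∈ X, u ∉ Y := fun u hu hy => (Finset.mem_sdiff.mp hy).2 hu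
  have hXYpt : ∀ u ∈ X, ∀ w ∈ Y, pt u ≠ pt w := by
    intro u hu w hw h
    have := hsamept u w (hXA u hu) h
    exact hYnc1 w hw (this ▸ (Finset.mem_filter.mp hu).2)
  have hXY9 : 9 ≤ X.card + Y.card := by
    have h1 : Y.card = Wset.card - X.card := by
      rw [hYdef, Finset.card_sdiff_of_subset hXW]
    have h2 : X.card ≤ Wset.card := Finset.card_le_card hXW
    omega
  by_cases hX5 : 5 ≤ X.card
  · exact mainaux c c1 c2 A a1 a2 a3 ha1 ha2 ha3 h12 h13 h23 pt key hptmem hptcard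
      hkeypt hptkey hcross12 X Y hXA hYA hXYd hXYpt hXcol hYcol hXY9 hX5
  · have hY5 : 5 ≤ Y.card := by omega
    exact mainaux c c2 c1 A a1 a2 a3 ha1 ha2 ha3 h12 h13 h23 pt key hptmem hptcard
      hkeypt hptkey (fun u v h => (hcross12 u v h).symm) Y X hYA hXA
      (fun u hu => (Finset.mem_sdiff.mp hu).2)
      (fun u hu w hw => (hXYpt w hw u hu).symm) hYcol hXcol (by omega) hY5
end
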